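/- arXiv:2010.15873 — 7 statements merged into one kernel-verified Lean document; each statement's English description precedes it below -/
import Mathlib

section
/- Let (X₁, m₁) and (X₂, m₂) be σ-finite measure spaces, 1 ≤ p < ∞, and F : X₁ × X₂ → ℝ measurable. Then the weak-L^p quasinorm of F on the product space is bounded by the L^p(X₁)-norm of the function x₁ ↦ ‖F(x₁, ·)‖_{L(p,∞)(X₂)}: ‖F‖_{L(p,∞)(X₁×X₂, m₁×m₂)} ≤ ‖ ‖F(x₁,·)‖_{L(p,∞)(X₂,m₂)} ‖_{L^p(X₁,m₁)}. -/
open MeasureTheory Filter Set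

noncomputable section

/-- Mixed-norm inequality: the weak-`L^p` quasinorm on a product space is bounded by the
`L^p` norm (in the first variable) of the weak-`L^p` quasinorm in the second variable. -/
theorem mixed_norm_weakLp
    {X₁ X₂ : Type*} [MeasurableSpace X₁] [MeasurableSpace X₂]
    (m₁ : Measure X₁) (m₂ : Measure X₂) [SigmaFinite m₁] [SigmaFinite m₂]
    (p : ℝ) (hp : 1 ≤ p)
    (F : X₁ × X₂ → ℝ) (hF : Measurable F) :
    (⨆ (l : ℝ) (_ : 0 < l),
        ENNReal.ofReal l * ((m₁.prod m₂) {q : X₁ × X₂ | l < |F q|}) ^ (1 / p))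
      ≤ (∫⁻ x₁, (⨆ (l : ℝ) (_ : 0 < l),
            ENNReal.ofReal l * (m₂ {x₂ : X₂ | l < |F (x₁, x₂)|}) ^ (1 / p)) ^ p ∂m₁) ^ (1 / p) := by
  have hp0 : 0 < p := lt_of_lt_of_le one_pos hp
  have hpne : p ≠ 0 := hp0.ne'
  refine iSup_le fun l => iSup_le fun hl => ?_
  have hS : MeasurableSet {q : X₁ × X₂ | l < |F q|} :=
    measurableSet_lt measurable_const hF.abs
  rw [Measure.prod_apply hS]
  have hmeas : Measurable fun x₁ => m₂ (Prod.mk x₁ ⁻¹' {q : X₁ × X₂ | l < |F q|}) :=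
    measurable_measure_prodMk_left hS
  have key : (ENNReal.ofReal l) ^ p *
      ∫⁻ x₁, m₂ (Prod.mk x₁ ⁻¹' {q : X₁ × X₂ | l < |F q|}) ∂m₁
      ≤ ∫⁻ x₁, (⨆ (l : ℝ) (_ : 0 < l),
            ENNReal.ofReal l * (m₂ {x₂ : X₂ | l < |F (x₁, x₂)|}) ^ (1 / p)) ^ p ∂m₁ := by
    rw [← lintegral_const_mul _ hmeas]
    refine lintegral_mono fun x₁ => ?_
    have hset : Prod.mk x₁ ⁻¹' {q : X₁ × X₂ | l < |F q|}
        = {x₂ : X₂ | l < |F (x₁, x₂)|} := rfl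
    rw [hset]
    have step1 : (ENNReal.ofReal l) ^ p * m₂ {x₂ : X₂ | l < |F (x₁, x₂)|}
        = (ENNReal.ofReal l * (m₂ {x₂ : X₂ | l < |F (x₁, x₂)|}) ^ (1 / p)) ^ p := by
      rw [ENNReal.mul_rpow_of_nonneg _ _ hp0.le, ← ENNReal.rpow_mul,
        one_div_mul_cancel hpne, ENNReal.rpow_one]
    rw [step1]
    exact ENNReal.rpow_le_rpow
      (le_iSup₂ (f := fun (l : ℝ) (_ : 0 < l) =>
        ENNReal.ofReal l * (m₂ {x₂ : X₂ | l < |F (x₁, x₂)|}) ^ (1 / p)) l hl) hp0.le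
  calc ENNReal.ofReal l *
        (∫⁻ x₁, m₂ (Prod.mk x₁ ⁻¹' {q : X₁ × X₂ | l < |F q|}) ∂m₁) ^ (1 / p)
      = ((ENNReal.ofReal l) ^ p *
        ∫⁻ x₁, m₂ (Prod.mk x₁ ⁻¹' {q : X₁ × X₂ | l < |F q|}) ∂m₁) ^ (1 / p) := by
        rw [ENNReal.mul_rpow_of_nonneg _ _ (by positivity : (0:ℝ) ≤ 1 / p),
          ← ENNReal.rpow_mul, mul_one_div, div_self hpne, ENNReal.rpow_one]
    _ ≤ _ := ENNReal.rpow_le_rpow key (by positivity)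
end
end

section
/- Let (X, m) be a σ-finite measure space, {T_t : t > 0} a family of operators on L^p(X,m) with 1 ≤ p < ∞, and γ > 0. Suppose that g(x) := lim_{t→0+} T_t f(x) exists and is finite for m-a.e. x ∈ X. Then (1/γ) ‖g‖_{L^p(X,m)}^p ≤ liminf_{λ→∞} λ^p (m × w_γ)({(x,t) ∈ X × (0,∞) : |T_t f(x)| / t^{γ/p} > λ}). -/
open MeasureTheory Filter Set
open scoped ENNReal

noncomputable section

/-- The measure `w_γ` on `(0,∞)` with density `t^(γ-1)`. -/
def wGamma (γ : ℝ) : Measure ℝ :=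
  (volume.restrict (Set.Ioi (0 : ℝ))).withDensity fun t => ENNReal.ofReal (t ^ (γ - 1))

/-!
Fix `x` with `T_t f x → g x` and `0 < G < |g x|`. Then `G < |T_t f x|` for `t < δ`, so for large `λ`
the slice `{t : λ t^(γ/p) < |T_t f x|}` contains `(0, (G/λ)^(p/γ))`, whose `w_γ`-measure is exactly
`G^p / (γ λ^p)`. Hence `liminf_λ λ^p w_γ(slice) ≥ |g x|^p / γ`, and Fatou's lemma in `x`
(with Tonelli for the product measure) gives the claim.
-/

open Topology

instance (γ : ℝ) : SFinite (wGamma γ) := by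
  unfold wGamma
  infer_instance

theorem wGamma_Ioo {γ : ℝ} (hγ : 0 < γ) {a : ℝ} (ha : 0 ≤ a) :
    wGamma γ (Ioo 0 a) = ENNReal.ofReal (a ^ γ / γ) := by
  have hint : IntegrableOn (fun t : ℝ => t ^ (γ - 1)) (Ioc 0 a) :=
    (intervalIntegral.intervalIntegrable_rpow' (by linarith)).1
  rw [wGamma, withDensity_apply _ measurableSet_Ioo, Measure.restrict_restrict measurableSet_Ioo,
    Ioo_inter_Ioi, max_self, setLIntegral_congr Ioo_ae_eq_Ioc,
    ← ofReal_integral_eq_lintegral_ofReal hint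
      (ae_restrict_of_forall_mem measurableSet_Ioc fun t ht => Real.rpow_nonneg ht.1.le _),
    ← intervalIntegral.integral_of_le ha, integral_rpow (Or.inl (by linarith))]
  simp [Real.zero_rpow hγ.ne']

theorem eventually_le_mul_wGamma_setOf {γ p G : ℝ} (hγ : 0 < γ) (hp : 0 < p) (hG : 0 < G)
    {v : ℝ → ℝ} (hv : ∀ᶠ t in 𝓝[>] 0, G < v t) :
    ∀ᶠ l in atTop, ENNReal.ofReal (G ^ p / γ) ≤
      ENNReal.ofReal (l ^ p) * wGamma γ {t | 0 < t ∧ l * t ^ (γ / p) < v t} := by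
  obtain ⟨δ, hδ, hδv⟩ := mem_nhdsGT_iff_exists_Ioo_subset.1 hv
  have ha : Tendsto (fun l : ℝ => (G / l) ^ (p / γ)) atTop (𝓝 0) := by
    have := (Real.continuousAt_rpow_const 0 (p / γ) (Or.inr (by positivity))).tendsto.comp
      (tendsto_const_nhds (x := G).div_atTop tendsto_id)
    rwa [Real.zero_rpow (div_pos hp hγ).ne'] at this
  filter_upwards [eventually_gt_atTop 0, ha.eventually (gt_mem_nhds hδ)] with l hl haδ
  -- `l * t ^ (γ / p) < G` exactly for `t < a`, and `l ^ p * w_γ (Ioo 0 a) = G ^ p / γ`.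
  set a := (G / l) ^ (p / γ)
  have hGl : 0 < G / l := div_pos hG hl
  have ha_rpow : a ^ (γ / p) = G / l := by
    rw [← Real.rpow_mul hGl.le, show p / γ * (γ / p) = 1 by field_simp, Real.rpow_one]
  have ha_rpow' : a ^ γ = G ^ p / l ^ p := by
    rw [← Real.rpow_mul hGl.le, div_mul_cancel₀ _ hγ.ne', Real.div_rpow hG.le hl.le]
  have hsub : Ioo 0 a ⊆ {t | 0 < t ∧ l * t ^ (γ / p) < v t} := by
    rintro t ⟨ht0, hta⟩
    refine ⟨ht0, lt_trans ?_ (hδv ⟨ht0, hta.trans haδ⟩)⟩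
    calc l * t ^ (γ / p) < l * a ^ (γ / p) := by gcongr
      _ = G := by rw [ha_rpow, mul_div_cancel₀ _ hl.ne']
  calc ENNReal.ofReal (G ^ p / γ) = ENNReal.ofReal (l ^ p) * ENNReal.ofReal (a ^ γ / γ) := by
        rw [← ENNReal.ofReal_mul (by positivity), ha_rpow']
        field_simp
    _ = ENNReal.ofReal (l ^ p) * wGamma γ (Ioo 0 a) := by
        rw [wGamma_Ioo hγ (by positivity)]
    _ ≤ _ := by gcongr

theorem ofReal_rpow_div_le_liminf_mul_wGamma {γ p G : ℝ} (hγ : 0 < γ) (hp : 0 < p) (hG : 0 ≤ G)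
    {v : ℝ → ℝ} (hv : Tendsto v (𝓝[>] 0) (𝓝 G)) :
    ENNReal.ofReal (G ^ p / γ) ≤ liminf (fun l => ENNReal.ofReal (l ^ p) *
      wGamma γ {t | 0 < t ∧ l * t ^ (γ / p) < v t}) atTop := by
  rcases hG.eq_or_lt with rfl | hG
  · simp [Real.zero_rpow hp.ne']
  have hcont : Continuous fun y : ℝ => ENNReal.ofReal (y ^ p / γ) :=
    ENNReal.continuous_ofReal.comp ((Real.continuous_rpow_const hp.le).div_const γ)
  refine le_of_tendsto (hcont.continuousWithinAt (s := Iio G) (x := G)).tendsto ?_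
  filter_upwards [Ioo_mem_nhdsLT hG] with G' hG'
  exact le_liminf_of_le (by isBoundedDefault)
    (eventually_le_mul_wGamma_setOf hγ hp hG'.1 (hv.eventually (eventually_gt_nhds hG'.2)))

theorem lower_bound_from_pointwise_limit_general
    {X : Type*} [MeasurableSpace X] (m : Measure X)
    (p γ : ℝ) (hp : 1 ≤ p) (hγ : 0 < γ)
    (T : ℝ → X → ℝ) (hT : Measurable fun q : X × ℝ => T q.2 q.1)
    (g : X → ℝ)
    (hlim : ∀ᵐ x ∂m, Tendsto (fun t => T t x) (nhdsWithin 0 (Set.Ioi 0)) (nhds (g x))) :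
    ENNReal.ofReal (1 / γ) * ∫⁻ x, ENNReal.ofReal (|g x| ^ p) ∂m
      ≤ Filter.liminf (fun l : ℝ => ENNReal.ofReal (l ^ p) *
          (m.prod (wGamma γ)) {q : X × ℝ | 0 < q.2 ∧ l * q.2 ^ (γ / p) < |T q.2 q.1|})
        Filter.atTop := by
  have hp0 : 0 < p := by linarith
  have hE : ∀ l : ℝ, MeasurableSet {q : X × ℝ | 0 < q.2 ∧ l * q.2 ^ (γ / p) < |T q.2 q.1|} :=
    fun l => (measurable_snd measurableSet_Ioi).inter
      (measurableSet_lt (by fun_prop) hT.abs)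
  calc ENNReal.ofReal (1 / γ) * ∫⁻ x, ENNReal.ofReal (|g x| ^ p) ∂m
      = ∫⁻ x, ENNReal.ofReal (|g x| ^ p / γ) ∂m := by
        rw [← lintegral_const_mul' _ _ ENNReal.ofReal_ne_top]
        simp_rw [← ENNReal.ofReal_mul (one_div_pos.2 hγ).le, one_div_mul_eq_div]
    _ ≤ ∫⁻ x, liminf (fun l : ℝ => ENNReal.ofReal (l ^ p) * wGamma γ
          {t | 0 < t ∧ l * t ^ (γ / p) < |T t x|}) atTop ∂m :=
        lintegral_mono_ae <| hlim.mono fun x hx =>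
          ofReal_rpow_div_le_liminf_mul_wGamma hγ hp0 (abs_nonneg _) hx.abs
    _ ≤ liminf (fun l : ℝ => ∫⁻ x, ENNReal.ofReal (l ^ p) * wGamma γ
          {t | 0 < t ∧ l * t ^ (γ / p) < |T t x|} ∂m) atTop :=
        lintegral_liminf_le fun l => (measurable_measure_prodMk_left (hE l)).const_mul _
    _ = _ := by
        simp_rw [lintegral_const_mul' _ _ ENNReal.ofReal_ne_top, Measure.prod_apply (hE _)]
        rfl

/-- Theorem (Maximal, part (ii)): if `T_t f (x)` converges, as `t → 0+`, to a finite limit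
`g x` for `m`-a.e. `x`, then `(1/γ) ‖g‖_p^p` is bounded by the `liminf` as `λ → ∞` of
`λ^p (m × w_γ)({(x,t) : |T_t f x| / t^(γ/p) > λ})`. -/
theorem lower_bound_from_pointwise_limit
    {X : Type*} [MeasurableSpace X] (m : Measure X) [SigmaFinite m]
    (p γ : ℝ) (hp : 1 ≤ p) (hγ : 0 < γ)
    (T : ℝ → X → ℝ) (hT : Measurable fun q : X × ℝ => T q.2 q.1)
    (g : X → ℝ)
    (hlim : ∀ᵐ x ∂m, Tendsto (fun t => T t x) (nhdsWithin 0 (Set.Ioi 0)) (nhds (g x))) :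
    ENNReal.ofReal (1 / γ) * ∫⁻ x, ENNReal.ofReal (|g x| ^ p) ∂m
      ≤ Filter.liminf (fun l : ℝ => ENNReal.ofReal (l ^ p) *
          (m.prod (wGamma γ)) {q : X × ℝ | 0 < q.2 ∧ l * q.2 ^ (γ / p) < |T q.2 q.1|})
        Filter.atTop :=
  lower_bound_from_pointwise_limit_general m p γ hp hγ T hT g hlim
end
end

section
/- Let (X, d) be a metric space with a doubling measure m, and let 1 ≤ p < ∞. Define T_t f(x) = (1/m(B(x,t))) ∫_{B(x,t)} f dm. Then there exists a constant C > 0 (depending only on the doubling constant) such that for all λ > 0 and all f ∈ L^p(X,m), (m × 𝓛)({(x,t) ∈ X × (0,∞) : |T_t f(x)| / t^{1/p} > λ}) ≤ C ‖f‖_{L^p(X,m)}^p / λ^p. -/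
/-!
If the ball average of `f` at `(x, t)` exceeds `λ t^{1/p}`, Jensen's inequality gives
`λ^p · t · m(B(x, t)) < ∫_{B(x, t)} |f|^p`. For each `x` pick such a radius `ρ(x)` that is at
least half of every other admissible one; the Vitali lemma then yields disjoint balls
`B(b, ρ(b))` whose boxes `B(b, 3ρ(b)) × (0, 4ρ(b)]` cover the level set. By doubling each box
has measure at most `4 D² ρ(b) m(B(b, ρ(b))) < 4 D² λ^{-p} ∫_{B(b, ρ(b))} |f|^p`, and
disjointness lets us sum. Radii are first truncated at `R` (as Vitali requires), then `R → ∞`.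
-/

open MeasureTheory Metric Set
open scoped ENNReal

theorem abs_average_rpow_le_average_abs_rpow {α : Type*} [MeasurableSpace α] {μ : Measure α}
    [IsFiniteMeasure μ] [NeZero μ] {p : ℝ} (hp : 1 ≤ p) {f : α → ℝ}
    (hf : MemLp f (ENNReal.ofReal p) μ) :
    |⨍ x, f x ∂μ| ^ p ≤ ⨍ x, |f x| ^ p ∂μ := by
  have hp0 : 0 < p := one_pos.trans_le hp
  have hfi : Integrable f μ := hf.integrable (ENNReal.one_le_ofReal.2 hp)
  have hfpi : Integrable (fun x => |f x| ^ p) μ := by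
    simpa [ENNReal.toReal_ofReal hp0.le] using
      hf.integrable_norm_rpow (by simpa using hp0) ENNReal.ofReal_ne_top
  have habs : |⨍ x, f x ∂μ| ≤ ⨍ x, |f x| ∂μ := by
    rw [average_eq, average_eq, smul_eq_mul, smul_eq_mul, abs_mul, abs_inv,
      abs_of_nonneg measureReal_nonneg]
    gcongr
    exact abs_integral_le_integral_abs
  calc |⨍ x, f x ∂μ| ^ p ≤ (⨍ x, |f x| ∂μ) ^ p := by gcongr
    _ ≤ ⨍ x, |f x| ^ p ∂μ :=
      (convexOn_rpow hp).map_average_le (Real.continuous_rpow_const hp0.le).continuousOn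
        isClosed_Ici (.of_forall fun x => abs_nonneg (f x)) hfi.abs hfpi

theorem ofReal_rpow_mul_measure_lt_setLIntegral {α : Type*} [MeasurableSpace α]
    {μ : Measure α} {p : ℝ} (hp : 1 ≤ p) {f : α → ℝ} (hf : MemLp f (ENNReal.ofReal p) μ)
    {s : Set α} (hs0 : μ s ≠ 0) (hs : μ s ≠ ∞) {a : ℝ} (ha : 0 ≤ a)
    (h : a < |⨍ x in s, f x ∂μ|) :
    ENNReal.ofReal (a ^ p) * μ s < ∫⁻ x in s, ENNReal.ofReal (|f x| ^ p) ∂μ := by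
  have hp0 : 0 < p := one_pos.trans_le hp
  have : IsFiniteMeasure (μ.restrict s) := isFiniteMeasure_restrict.2 hs
  have : NeZero (μ.restrict s) := ⟨by simpa using hs0⟩
  have hfpi : Integrable (fun x => |f x| ^ p) (μ.restrict s) := by
    simpa [ENNReal.toReal_ofReal hp0.le] using
      (hf.restrict s).integrable_norm_rpow (by simpa using hp0) ENNReal.ofReal_ne_top
  have hlt : a ^ p < ⨍ x in s, |f x| ^ p ∂μ :=
    (Real.rpow_lt_rpow ha h hp0).trans_le
      (abs_average_rpow_le_average_abs_rpow hp (hf.restrict s))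
  rw [setAverage_eq, smul_eq_mul, measureReal_def,
    lt_inv_mul_iff₀ (ENNReal.toReal_pos hs0 hs), mul_comm] at hlt
  rw [← ofReal_integral_eq_lintegral_ofReal hfpi (.of_forall fun x => by positivity),
    ← ENNReal.ofReal_toReal hs, ← ENNReal.ofReal_mul (by positivity)]
  exact (ENNReal.ofReal_lt_ofReal_iff_of_nonneg (by positivity)).2 hlt

theorem ofReal_rpow_mul_ofReal_mul_measure_lt_setLIntegral {α : Type*} [MeasurableSpace α]
    {μ : Measure α} {p : ℝ} (hp : 1 ≤ p) {f : α → ℝ} (hf : MemLp f (ENNReal.ofReal p) μ)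
    {s : Set α} (hs0 : μ s ≠ 0) (hs : μ s ≠ ∞) {l t : ℝ} (hl : 0 ≤ l) (ht : 0 ≤ t)
    (h : l * t ^ (1 / p) < |⨍ x in s, f x ∂μ|) :
    ENNReal.ofReal (l ^ p) * (ENNReal.ofReal t * μ s) <
      ∫⁻ x in s, ENNReal.ofReal (|f x| ^ p) ∂μ := by
  have hpow : (l * t ^ (1 / p)) ^ p = l ^ p * t := by
    rw [Real.mul_rpow hl (by positivity), one_div, Real.rpow_inv_rpow ht (by linarith)]
  rw [← mul_assoc, ← ENNReal.ofReal_mul (by positivity), ← hpow]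
  exact ofReal_rpow_mul_measure_lt_setLIntegral hp hf hs0 hs (by positivity) h

theorem exists_pairwiseDisjoint_ball_forall_mem_ball_three_mul {X : Type*} [MetricSpace X]
    (P : X → ℝ → Prop) {R : ℝ} (hP : ∀ x t, P x t → 0 < t ∧ t ≤ R) :
    ∃ (u : Set X) (r : X → ℝ), (∀ b ∈ u, P b (r b)) ∧
      u.PairwiseDisjoint (fun b => ball b (r b)) ∧
      ∀ x t, P x t → ∃ b ∈ u, x ∈ ball b (3 * r b) ∧ t ≤ 4 * r b := by
  have hsel : ∀ x ∈ {x | ∃ t, P x t}, ∃ ρ, P x ρ ∧ ∀ t, P x t → t < 2 * ρ := by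
    rintro x ⟨t₀, ht₀⟩
    have hbdd : BddAbove {t | P x t} := ⟨R, fun t ht => (hP x t ht).2⟩
    have hsup : 0 < sSup {t | P x t} := (hP x t₀ ht₀).1.trans_le (le_csSup hbdd ht₀)
    obtain ⟨ρ, hρ, hlt⟩ : ∃ ρ ∈ {t | P x t}, sSup {t | P x t} / 2 < ρ :=
      exists_lt_of_lt_csSup ⟨t₀, ht₀⟩ (half_lt_self hsup)
    exact ⟨ρ, hρ, fun t ht => by linarith [le_csSup hbdd ht]⟩
  choose! r hrP hrmax using hsel
  obtain ⟨u, huS, hdisj, hcov⟩ := Vitali.exists_disjoint_subfamily_covering_enlargement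
    (fun x => ball x (r x)) {x | ∃ t, P x t} r 2 one_lt_two
    (fun x hx => (hP x _ (hrP x hx)).1.le) R (fun x hx => (hP x _ (hrP x hx)).2)
    (fun x hx => ⟨x, mem_ball_self (hP x _ (hrP x hx)).1⟩)
  refine ⟨u, r, fun b hb => hrP b (huS hb), hdisj, fun x t hxt => ?_⟩
  obtain ⟨b, hbu, ⟨z, hzx, hzb⟩, hrb⟩ := hcov x ⟨t, hxt⟩
  have htr := hrmax x ⟨t, hxt⟩ t hxt
  rw [mem_ball] at hzx hzb
  refine ⟨b, hbu, mem_ball.2 ?_, by linarith⟩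
  linarith [dist_triangle x z b, dist_comm x z]

section Doubling

variable {X : Type*} [MetricSpace X] [MeasurableSpace X] {m : Measure X} {D : ℝ≥0∞}

theorem measure_prod_ball_three_mul_prod_Ioc_le
    (hdoub : ∀ x r, 0 < r → m (ball x (2 * r)) ≤ D * m (ball x r)) (x : X) {r : ℝ}
    (hr : 0 < r) :
    m.prod (volume.restrict (Ioi (0 : ℝ))) (ball x (3 * r) ×ˢ Ioc 0 (4 * r)) ≤
      4 * D ^ 2 * (ENNReal.ofReal r * m (ball x r)) := by
  have hball : m (ball x (3 * r)) ≤ D ^ 2 * m (ball x r) :=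
    calc m (ball x (3 * r)) ≤ m (ball x (2 * (2 * r))) :=
          measure_mono (ball_subset_ball (by linarith))
      _ ≤ D * (D * m (ball x r)) :=
          (hdoub x _ (by positivity)).trans (mul_le_mul_right (hdoub x r hr) D)
      _ = D ^ 2 * m (ball x r) := by ring
  have hIoc : volume.restrict (Ioi (0 : ℝ)) (Ioc 0 (4 * r)) ≤ 4 * ENNReal.ofReal r := by
    refine (Measure.restrict_apply_le _ _).trans ?_
    rw [Real.volume_Ioc, sub_zero, ENNReal.ofReal_mul zero_le_four, ENNReal.ofReal_ofNat]
  calc m.prod (volume.restrict (Ioi (0 : ℝ))) (ball x (3 * r) ×ˢ Ioc 0 (4 * r))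
      ≤ m (ball x (3 * r)) * volume.restrict (Ioi (0 : ℝ)) (Ioc 0 (4 * r)) :=
        Measure.prod_prod_le _ _
    _ ≤ D ^ 2 * m (ball x r) * (4 * ENNReal.ofReal r) := by gcongr
    _ = 4 * D ^ 2 * (ENNReal.ofReal r * m (ball x r)) := by ring

variable [OpensMeasurableSpace X] [SFinite m]

theorem mul_measure_prod_le_lintegral_of_le
    (hpos : ∀ x r, 0 < r → 0 < m (ball x r))
    (hdoub : ∀ x r, 0 < r → m (ball x (2 * r)) ≤ D * m (ball x r))
    {g : X → ℝ≥0∞} {c : ℝ≥0∞} {E : Set (X × ℝ)} {R : ℝ}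
    (hE : ∀ q ∈ E, (0 < q.2 ∧ q.2 ≤ R) ∧
      c * (ENNReal.ofReal q.2 * m (ball q.1 q.2)) < ∫⁻ y in ball q.1 q.2, g y ∂m) :
    c * m.prod (volume.restrict (Ioi (0 : ℝ))) E ≤ 4 * D ^ 2 * ∫⁻ y, g y ∂m := by
  obtain ⟨u, r, hrP, hdisj, hcov⟩ := exists_pairwiseDisjoint_ball_forall_mem_ball_three_mul
    (fun x t => (0 < t ∧ t ≤ R) ∧
      c * (ENNReal.ofReal t * m (ball x t)) < ∫⁻ y in ball x t, g y ∂m)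
    (fun x t h => h.1)
  have hdisj' : Pairwise (Function.onFun Disjoint fun b : u => ball (b : X) (r b)) :=
    fun b b' hbb' => hdisj b.2 b'.2 (Subtype.coe_injective.ne hbb')
  have : Countable u := by
    have huniv : {b : u | 0 < m (ball b (r b))} = univ :=
      eq_univ_of_forall fun b => hpos _ _ (hrP b b.2).1.1
    have := Measure.countable_meas_pos_of_disjoint_iUnion (μ := m)
      (fun _ => measurableSet_ball) hdisj'
    rwa [huniv, countable_univ_iff] at this
  have hu : u.Countable := countable_coe_iff.1 this
  have hEcov : E ⊆ ⋃ b ∈ u, ball b (3 * r b) ×ˢ Ioc 0 (4 * r b) := by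
    rintro ⟨x, t⟩ hq
    obtain ⟨b, hbu, hxb, htb⟩ := hcov x t (hE _ hq)
    exact mem_biUnion hbu ⟨hxb, (hE _ hq).1.1, htb⟩
  calc c * m.prod (volume.restrict (Ioi (0 : ℝ))) E
      ≤ c * ∑' b : u,
          m.prod (volume.restrict (Ioi (0 : ℝ)))
            (ball (b : X) (3 * r b) ×ˢ Ioc 0 (4 * r b)) := by
        gcongr; exact (measure_mono hEcov).trans (measure_biUnion_le _ hu _)
    _ = ∑' b : u,
          c * m.prod (volume.restrict (Ioi (0 : ℝ)))
            (ball (b : X) (3 * r b) ×ˢ Ioc 0 (4 * r b)) :=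
        ENNReal.tsum_mul_left.symm
    _ ≤ ∑' b : u, 4 * D ^ 2 * ∫⁻ y in ball b (r b), g y ∂m := by
        refine ENNReal.tsum_le_tsum fun b => ?_
        calc c * m.prod (volume.restrict (Ioi (0 : ℝ)))
              (ball (b : X) (3 * r b) ×ˢ Ioc 0 (4 * r b))
            ≤ c * (4 * D ^ 2 * (ENNReal.ofReal (r b) * m (ball b (r b)))) := by
              gcongr; exact measure_prod_ball_three_mul_prod_Ioc_le hdoub _ (hrP b b.2).1.1
          _ = 4 * D ^ 2 * (c * (ENNReal.ofReal (r b) * m (ball b (r b)))) := by ring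
          _ ≤ 4 * D ^ 2 * ∫⁻ y in ball b (r b), g y ∂m := by gcongr; exact (hrP b b.2).2.le
    _ = 4 * D ^ 2 * ∫⁻ y in ⋃ b : u, ball b (r b), g y ∂m := by
        rw [ENNReal.tsum_mul_left, lintegral_iUnion (fun _ => measurableSet_ball) hdisj']
    _ ≤ 4 * D ^ 2 * ∫⁻ y, g y ∂m := mul_le_mul_right (setLIntegral_le_lintegral _ _) _

theorem mul_measure_prod_le_lintegral
    (hpos : ∀ x r, 0 < r → 0 < m (ball x r))
    (hdoub : ∀ x r, 0 < r → m (ball x (2 * r)) ≤ D * m (ball x r))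
    {g : X → ℝ≥0∞} {c : ℝ≥0∞} {E : Set (X × ℝ)}
    (hE : ∀ q ∈ E, 0 < q.2 ∧
      c * (ENNReal.ofReal q.2 * m (ball q.1 q.2)) < ∫⁻ y in ball q.1 q.2, g y ∂m) :
    c * m.prod (volume.restrict (Ioi (0 : ℝ))) E ≤ 4 * D ^ 2 * ∫⁻ y, g y ∂m := by
  have hmono : Monotone fun R : ℝ => E ∩ {q | q.2 ≤ R} :=
    fun R R' h => inter_subset_inter_right E fun q hq => le_trans hq h
  have hE_eq : E = ⋃ R : ℝ, E ∩ {q | q.2 ≤ R} := by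
    ext q; simpa using fun _ => ⟨q.2, le_rfl⟩
  rw [hE_eq, hmono.measure_iUnion, ENNReal.mul_iSup]
  refine iSup_le fun R => mul_measure_prod_le_lintegral_of_le (R := R) hpos hdoub fun q hq => ?_
  exact ⟨⟨(hE q hq.1).1, hq.2⟩, (hE q hq.1).2⟩

end Doubling

/-- Theorem (weak-type `(p,p)` bound on the product space for ball averages over a doubling
metric measure space). -/
theorem weak_type_ball_averages_doubling
    {X : Type*} [MetricSpace X] [MeasurableSpace X] [BorelSpace X]
    (m : Measure X) [SigmaFinite m]
    (Cd : ℝ)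
    (hdoub : ∀ (x : X) (r : ℝ), 0 < r →
      0 < m (Metric.ball x r) ∧
      m (Metric.ball x (2 * r)) ≤ ENNReal.ofReal Cd * m (Metric.ball x r) ∧
      m (Metric.ball x (2 * r)) < ∞)
    (p : ℝ) (hp : 1 ≤ p) :
    ∃ C > (0 : ℝ), ∀ f : X → ℝ, MemLp f (ENNReal.ofReal p) m → ∀ l > (0 : ℝ),
      (m.prod (volume.restrict (Set.Ioi (0 : ℝ))))
          {q : X × ℝ | 0 < q.2 ∧ l * q.2 ^ (1 / p) < |⨍ y in Metric.ball q.1 q.2, f y ∂m|}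
        ≤ ENNReal.ofReal C * (∫⁻ x, ENNReal.ofReal (|f x| ^ p) ∂m) / ENNReal.ofReal (l ^ p) := by
  have hpos : ∀ x r, 0 < r → 0 < m (ball x r) := fun x r hr => (hdoub x r hr).1
  have hfin : ∀ x r, 0 < r → m (ball x r) ≠ ∞ := fun x r hr =>
    ((measure_mono (ball_subset_ball (by linarith))).trans_lt (hdoub x r hr).2.2).ne
  refine ⟨4 * max Cd 1 ^ 2, by positivity, fun f hf l hl => ?_⟩
  have hlp : 0 < l ^ p := Real.rpow_pos_of_pos hl p
  rw [ENNReal.le_div_iff_mul_le (.inl (ENNReal.ofReal_pos.2 hlp).ne')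
    (.inl ENNReal.ofReal_ne_top), mul_comm]
  calc ENNReal.ofReal (l ^ p) * (m.prod (volume.restrict (Ioi (0 : ℝ))))
        {q : X × ℝ | 0 < q.2 ∧ l * q.2 ^ (1 / p) < |⨍ y in ball q.1 q.2, f y ∂m|}
      ≤ 4 * ENNReal.ofReal Cd ^ 2 * ∫⁻ x, ENNReal.ofReal (|f x| ^ p) ∂m :=
        mul_measure_prod_le_lintegral hpos (fun x r hr => (hdoub x r hr).2.1) fun q hq =>
          ⟨hq.1, ofReal_rpow_mul_ofReal_mul_measure_lt_setLIntegral hp hf (hpos _ _ hq.1).ne'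
            (hfin _ _ hq.1) hl.le hq.1.le hq.2⟩
    _ ≤ ENNReal.ofReal (4 * max Cd 1 ^ 2) * ∫⁻ x, ENNReal.ofReal (|f x| ^ p) ∂m := by
        rw [ENNReal.ofReal_mul zero_le_four, ENNReal.ofReal_pow (by positivity),
          ENNReal.ofReal_ofNat]
        gcongr
        exact le_max_left _ _
end

section
/- Let (X, d, m) be a metric measure space, 1 ≤ p < ∞, and let f : X → ℝ be Hölder continuous of order 1/p: |f(x) − f(y)| ≤ M d(x,y)^{1/p} for all x, y ∈ X. Suppose also f ∈ L^p(X,m). Then with T_t f(x) = (1/m(B(x,t))) ∫_{B(x,t)} f dm, one has ‖T_t f − f‖_{L^∞(X,m)} ≤ M t^{1/p} for all t > 0, and consequently ‖f‖_{L^p(X,m)}^p = lim_{λ→∞} λ^p (m × 𝓛)({(x,t) : |T_t f(x)| > λ t^{1/p}}). -/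
/-!
Averaging the Hölder bound `|f y - f x| ≤ M t^(1/p)` over `y ∈ B(x,t)` gives
`|T_t f x - f x| ≤ M t^(1/p)`. Hence the region `{(x,t) : λ t^(1/p) < |T_t f x|}` lies between
the regions `{(x,t) : c t^(1/p) < |f x|}` for `c = λ + M` and `c = λ - M`. By Tonelli, the slice
of such a region over `x` is the interval `(0, (|f x| / c)^p)`, so its measure is
`c^(-p) ‖f‖_p^p`; after multiplying by `λ^p` both bounds are `(λ / (λ ± M))^p ‖f‖_p^p`, which
tend to `‖f‖_p^p`.
-/

open MeasureTheory Filter Set Metric Topology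
open scoped ENNReal

theorem continuous_of_dist_le_mul_rpow {X Y : Type*} [PseudoMetricSpace X] [PseudoMetricSpace Y]
    {f : X → Y} {M r : ℝ} (hr : 0 < r) (hf : ∀ x y, dist (f x) (f y) ≤ M * dist x y ^ r) :
    Continuous f := by
  refine continuous_iff_continuousAt.2 fun x => tendsto_iff_dist_tendsto_zero.2 ?_
  have hbound : Tendsto (fun y => M * dist y x ^ r) (𝓝 x) (𝓝 0) := by
    have hdist : Tendsto (fun y => dist y x) (𝓝 x) (𝓝 0) := by
      simpa using (tendsto_id (x := 𝓝 x)).dist (tendsto_const_nhds (x := x))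
    simpa [Real.zero_rpow hr.ne'] using (hdist.rpow_const (Or.inr hr.le)).const_mul M
  exact squeeze_zero (fun _ => dist_nonneg) (fun y => hf y x) hbound

theorem norm_setAverage_sub_le {α E : Type*} [MeasurableSpace α] {μ : Measure α}
    [NormedAddCommGroup E] [NormedSpace ℝ E] [CompleteSpace E] {s : Set α} {g : α → E} {c : E}
    {C : ℝ} (hs : MeasurableSet s) (h0 : μ s ≠ 0) (hfin : μ s ≠ ∞)
    (hg : AEStronglyMeasurable g (μ.restrict s)) (hC : ∀ y ∈ s, ‖g y - c‖ ≤ C) :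
    ‖(⨍ y in s, g y ∂μ) - c‖ ≤ C := by
  have hg_int : IntegrableOn g s μ := by
    refine .of_bound hfin.lt_top hg (‖c‖ + C) (ae_restrict_of_forall_mem hs fun y hy => ?_)
    calc ‖g y‖ ≤ ‖c‖ + ‖g y - c‖ := norm_le_norm_add_norm_sub' (g y) c
      _ ≤ ‖c‖ + C := by gcongr; exact hC y hy
  rw [← dist_eq_norm, ← mem_closedBall]
  exact (convex_closedBall c C).set_average_mem isClosed_closedBall h0 hfin
    (ae_restrict_of_forall_mem hs fun y hy => mem_closedBall_iff_norm.2 (hC y hy)) hg_int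

theorem abs_setAverage_ball_sub_le {X : Type*} [PseudoMetricSpace X] [MeasurableSpace X]
    [OpensMeasurableSpace X] {μ : Measure X} {f : X → ℝ} {M r : ℝ} (hM : 0 ≤ M) (hr : 0 < r)
    (hf : ∀ x y, |f x - f y| ≤ M * dist x y ^ r) {x : X} {t : ℝ}
    (h0 : μ (ball x t) ≠ 0) (hfin : μ (ball x t) ≠ ∞) :
    |(⨍ y in ball x t, f y ∂μ) - f x| ≤ M * t ^ r := by
  have hcont : Continuous f :=
    continuous_of_dist_le_mul_rpow hr (by simpa only [Real.dist_eq] using hf)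
  refine norm_setAverage_sub_le measurableSet_ball h0 hfin hcont.aestronglyMeasurable
    fun y hy => (hf y x).trans ?_
  gcongr
  exact (mem_ball.1 hy).le

theorem setOf_pos_and_mul_rpow_lt_eq_Ioo {a c p : ℝ} (ha : 0 ≤ a) (hc : 0 < c) (hp : 0 < p) :
    {t : ℝ | 0 < t ∧ c * t ^ (1 / p) < a} = Ioo 0 ((a / c) ^ p) := by
  ext t
  simp only [mem_ofPred_eq, mem_Ioo, and_congr_right_iff]
  intro ht
  rw [← lt_div_iff₀' hc, one_div, Real.rpow_inv_lt_iff_of_pos ht.le (by positivity) hp]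

theorem prod_restrict_Ioi_setOf_mul_rpow_lt {X : Type*} [MeasurableSpace X] (μ : Measure X)
    {g : X → ℝ} (hg : Measurable g) (hg0 : ∀ x, 0 ≤ g x) {c p : ℝ} (hc : 0 < c) (hp : 0 < p) :
    μ.prod (volume.restrict (Ioi 0)) {q : X × ℝ | 0 < q.2 ∧ c * q.2 ^ (1 / p) < g q.1}
      = ∫⁻ x, ENNReal.ofReal ((g x / c) ^ p) ∂μ := by
  have hmeas : MeasurableSet {q : X × ℝ | 0 < q.2 ∧ c * q.2 ^ (1 / p) < g q.1} :=
    (measurableSet_lt measurable_const measurable_snd).inter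
      (measurableSet_lt ((measurable_snd.pow_const _).const_mul c) (hg.comp measurable_fst))
  rw [Measure.prod_apply hmeas]
  refine lintegral_congr fun x => ?_
  change volume.restrict (Ioi 0) {t : ℝ | 0 < t ∧ c * t ^ (1 / p) < g x} = _
  rw [setOf_pos_and_mul_rpow_lt_eq_Ioo (hg0 x) hc hp, Measure.restrict_apply measurableSet_Ioo,
    inter_eq_left.2 Ioo_subset_Ioi_self, Real.volume_Ioo, sub_zero]

theorem ofReal_rpow_mul_lintegral_div_rpow {X : Type*} [MeasurableSpace X] (μ : Measure X)
    {g : X → ℝ} (hg0 : ∀ x, 0 ≤ g x) {c l p : ℝ} (hc : 0 < c) (hl : 0 < l) :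
    ENNReal.ofReal (l ^ p) * ∫⁻ x, ENNReal.ofReal ((g x / c) ^ p) ∂μ
      = ENNReal.ofReal ((l / c) ^ p) * ∫⁻ x, ENNReal.ofReal (g x ^ p) ∂μ := by
  rw [← lintegral_const_mul' _ _ ENNReal.ofReal_ne_top,
    ← lintegral_const_mul' _ _ ENNReal.ofReal_ne_top]
  refine lintegral_congr fun x => ?_
  have hgx := hg0 x
  rw [← ENNReal.ofReal_mul (by positivity), ← ENNReal.ofReal_mul (by positivity),
    ← Real.mul_rpow hl.le (by positivity), ← Real.mul_rpow (by positivity) hgx]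
  congr 2
  field_simp

theorem tendsto_ofReal_div_add_rpow_mul (a p : ℝ) (I : ENNReal) :
    Tendsto (fun l : ℝ => ENNReal.ofReal ((l / (l + a)) ^ p) * I) atTop (𝓝 I) := by
  have hratio : Tendsto (fun l : ℝ => l / (l + a)) atTop (𝓝 1) := by
    have hsmall : Tendsto (fun l : ℝ => 1 - a / (l + a)) atTop (𝓝 1) := by
      simpa using tendsto_const_nhds.sub
        (tendsto_const_nhds.div_atTop (tendsto_atTop_add_const_right _ a tendsto_id))
    refine hsmall.congr' ?_
    filter_upwards [eventually_gt_atTop (-a)] with l hl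
    have : l + a ≠ 0 := by linarith
    field_simp
    ring
  have hpow : Tendsto (fun l : ℝ => (l / (l + a)) ^ p) atTop (𝓝 1) := by
    simpa using hratio.rpow_const (p := p) (Or.inl one_ne_zero)
  have hofReal : Tendsto (fun l : ℝ => ENNReal.ofReal ((l / (l + a)) ^ p)) atTop (𝓝 1) := by
    simpa using ENNReal.tendsto_ofReal hpow
  simpa using ENNReal.Tendsto.mul_const hofReal (Or.inl one_ne_zero)

theorem tendsto_rpow_mul_prod_restrict_Ioi_setOf_lt {X : Type*} [MeasurableSpace X]
    (μ : Measure X) {g : X → ℝ} (hg : Measurable g) {G : X × ℝ → ℝ} {M p : ℝ} (hp : 0 < p)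
    (hG : ∀ x, ∀ t > 0, |G (x, t) - g x| ≤ M * t ^ (1 / p)) :
    Tendsto (fun l : ℝ => ENNReal.ofReal (l ^ p) *
        μ.prod (volume.restrict (Ioi 0)) {q : X × ℝ | 0 < q.2 ∧ l * q.2 ^ (1 / p) < |G q|})
      atTop (𝓝 (∫⁻ x, ENNReal.ofReal (|g x| ^ p) ∂μ)) := by
  have hscaled : ∀ c l : ℝ, 0 < c → 0 < l → ENNReal.ofReal (l ^ p) *
      μ.prod (volume.restrict (Ioi 0)) {q : X × ℝ | 0 < q.2 ∧ c * q.2 ^ (1 / p) < |g q.1|}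
        = ENNReal.ofReal ((l / c) ^ p) * ∫⁻ x, ENNReal.ofReal (|g x| ^ p) ∂μ := fun c l hc hl => by
    rw [prod_restrict_Ioi_setOf_mul_rpow_lt μ hg.abs (fun x => abs_nonneg (g x)) hc hp,
      ofReal_rpow_mul_lintegral_div_rpow μ (fun x => abs_nonneg (g x)) hc hl]
  refine tendsto_of_tendsto_of_tendsto_of_le_of_le' (tendsto_ofReal_div_add_rpow_mul M p _)
    (tendsto_ofReal_div_add_rpow_mul (-M) p _) ?_ ?_
  all_goals
    filter_upwards [eventually_gt_atTop |M|] with l hl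
    obtain ⟨hlM, hMl⟩ := abs_lt.1 hl
  · rw [← hscaled (l + M) l (by linarith) (by linarith)]
    refine mul_le_mul_right (measure_mono ?_) _
    rintro ⟨x, t⟩ ⟨ht, hlt⟩
    refine ⟨ht, ?_⟩
    have hgG := abs_sub_abs_le_abs_sub (g x) (G (x, t))
    rw [abs_sub_comm] at hgG
    linarith [hG x t ht, add_mul l M (t ^ (1 / p))]
  · rw [← hscaled (l + -M) l (by linarith) (by linarith)]
    refine mul_le_mul_right (measure_mono ?_) _
    rintro ⟨x, t⟩ ⟨ht, hlt⟩
    refine ⟨ht, ?_⟩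
    have hGg := abs_sub_abs_le_abs_sub (G (x, t)) (g x)
    linarith [hG x t ht, add_mul l (-M) (t ^ (1 / p))]

theorem holder_ball_averages_limit_general
    {X : Type*} [MetricSpace X] [MeasurableSpace X] [BorelSpace X]
    (m : Measure X)
    (hball : ∀ (x : X) (r : ℝ), 0 < r → 0 < m (Metric.ball x r) ∧ m (Metric.ball x r) < ∞)
    (p : ℝ) (hp : 1 ≤ p)
    (f : X → ℝ)
    (M : ℝ) (hM : 0 < M)
    (hHolder : ∀ x y : X, |f x - f y| ≤ M * dist x y ^ (1 / p)) :
    (∀ t > (0 : ℝ),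
        essSup (fun x => ENNReal.ofReal |(⨍ y in Metric.ball x t, f y ∂m) - f x|) m
          ≤ ENNReal.ofReal (M * t ^ (1 / p))) ∧
    Tendsto (fun l : ℝ => ENNReal.ofReal (l ^ p) *
        (m.prod (volume.restrict (Set.Ioi (0 : ℝ))))
          {q : X × ℝ | 0 < q.2 ∧ l * q.2 ^ (1 / p) < |⨍ y in Metric.ball q.1 q.2, f y ∂m|})
      atTop (nhds (∫⁻ x, ENNReal.ofReal (|f x| ^ p) ∂m)) := by
  have hp₀ : 0 < p := by linarith
  have hcont : Continuous f :=
    continuous_of_dist_le_mul_rpow (one_div_pos.2 hp₀) (by simpa only [Real.dist_eq] using hHolder)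
  have hT : ∀ x, ∀ t > 0, |(⨍ y in ball x t, f y ∂m) - f x| ≤ M * t ^ (1 / p) := fun x t ht =>
    abs_setAverage_ball_sub_le hM.le (one_div_pos.2 hp₀) hHolder (hball x t ht).1.ne'
      (hball x t ht).2.ne
  refine ⟨fun t ht => essSup_le_of_ae_le _ (.of_forall fun x => ?_), ?_⟩
  · exact ENNReal.ofReal_le_ofReal (hT x t ht)
  · exact tendsto_rpow_mul_prod_restrict_Ioi_setOf_lt m hcont.measurable
      (G := fun q => ⨍ y in ball q.1 q.2, f y ∂m) hp₀ hT

/-- For `f` Hölder continuous of order `1/p` in `L^p` over a metric measure space, the ball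
averages `T_t f` satisfy `‖T_t f − f‖_∞ ≤ M t^(1/p)` and consequently
`‖f‖_p^p = lim_{λ→∞} λ^p (m × 𝓛)({(x,t) : |T_t f x| > λ t^(1/p)})`. -/
theorem holder_ball_averages_limit
    {X : Type*} [MetricSpace X] [MeasurableSpace X] [BorelSpace X]
    (m : Measure X) [SigmaFinite m]
    (hball : ∀ (x : X) (r : ℝ), 0 < r → 0 < m (Metric.ball x r) ∧ m (Metric.ball x r) < ∞)
    (p : ℝ) (hp : 1 ≤ p)
    (f : X → ℝ) (hfmeas : Measurable f)
    (M : ℝ) (hM : 0 < M)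
    (hHolder : ∀ x y : X, |f x - f y| ≤ M * dist x y ^ (1 / p))
    (hf : MemLp f (ENNReal.ofReal p) m) :
    (∀ t > (0 : ℝ),
        essSup (fun x => ENNReal.ofReal |(⨍ y in Metric.ball x t, f y ∂m) - f x|) m
          ≤ ENNReal.ofReal (M * t ^ (1 / p))) ∧
    Tendsto (fun l : ℝ => ENNReal.ofReal (l ^ p) *
        (m.prod (volume.restrict (Set.Ioi (0 : ℝ))))
          {q : X × ℝ | 0 < q.2 ∧ l * q.2 ^ (1 / p) < |⨍ y in Metric.ball q.1 q.2, f y ∂m|})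
      atTop (nhds (∫⁻ x, ENNReal.ofReal (|f x| ^ p) ∂m)) :=
  holder_ball_averages_limit_general m hball p hp f M hM hHolder
end

section
/- Let 1 < p < ∞, s ∈ [0,1], and f locally integrable on ℝ^N. Define the restricted sharp fractional maximal function f^#_{R,s}(x) = sup_{0<r<R} r^{−s−N} ∫_{B(x,r)} |f(y) − (f)_{B(x,r)}| dy. Then ‖f^#_s‖_{L^p(ℝ^N)}^p = sup_{λ>0} λ^p 𝓛^{N+1}({(x,R) ∈ ℝ^N × (0,∞) : f^#_{1/R,s}(x) / R^{1/p} > λ}) = lim_{λ→∞} λ^p 𝓛^{N+1}({(x,R) : f^#_{1/R,s}(x) / R^{1/p} > λ}). -/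
/-!
For fixed `x`, `H R = f^#_{1/R,s}(x)` is nonincreasing in `R` and increases to `f^#_s(x)` as
`R → 0`. For any such `H`, the quantity `l ^ p · |{R > 0 : H R / R ^ (1 / p) > l}|` is
nondecreasing in `l` (dilate the level set by `(l / l') ^ p`) and its supremum is `(sup H) ^ p`:
the level set lies in `(0, (sup H / l) ^ p)`, and contains `(0, R₀)` as soon as
`H R₀ > l R₀ ^ (1 / p)`. By Tonelli the `(N + 1)`-dimensional measure of the level set is the
integral over `x` of these one-dimensional quantities, and monotone convergence exchanges the
supremum in `l` with the integral. The level sets are open, hence measurable, because the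
oscillation of `f` over `ball x r` depends continuously on `x`.
-/

open MeasureTheory Filter Set
open scoped ENNReal

noncomputable section

/-- The sharp fractional maximal function `f^#_s` on `ℝ^N`. -/
def fracSharp (N : ℕ) (s : ℝ) (f : EuclideanSpace ℝ (Fin N) → ℝ)
    (x : EuclideanSpace ℝ (Fin N)) : ℝ≥0∞ :=
  ⨆ (r : ℝ) (_ : 0 < r),
    ENNReal.ofReal (r ^ (-(s + N))) *
      ∫⁻ y in Metric.ball x r,
        ENNReal.ofReal |f y - ⨍ z in Metric.ball x r, f z ∂volume| ∂volume

/-- The restricted sharp fractional maximal function `f^#_{R,s}` on `ℝ^N`. -/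
def fracSharpRes (N : ℕ) (s R : ℝ) (f : EuclideanSpace ℝ (Fin N) → ℝ)
    (x : EuclideanSpace ℝ (Fin N)) : ℝ≥0∞ :=
  ⨆ (r : ℝ) (_ : 0 < r) (_ : r < R),
    ENNReal.ofReal (r ^ (-(s + N))) *
      ∫⁻ y in Metric.ball x r,
        ENNReal.ofReal |f y - ⨍ z in Metric.ball x r, f z ∂volume| ∂volume

open Metric Topology
open scoped Pointwise

section MonotoneOnIoi

variable {a : ℝ}

theorem MonotoneOn.iSup_Ioi_eq_iSup_nat {α : Type*} [CompleteLattice α] {φ : ℝ → α}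
    (h : MonotoneOn φ (Ioi a)) : ⨆ (l : ℝ) (_ : a < l), φ l = ⨆ n : ℕ, φ (a + (n + 1)) := by
  refine le_antisymm (iSup₂_le fun l hl => ?_)
    (iSup_le fun n => le_iSup₂_of_le (a + (n + 1)) (by simp; positivity) le_rfl)
  obtain ⟨n, hn⟩ := exists_nat_ge (l - a)
  exact (h hl (show a < a + (n + 1) by simp; positivity) (by linarith)).trans
    (le_iSup_of_le n le_rfl)

theorem MonotoneOn.tendsto_atTop_iSup_Ioi {α : Type*} [CompleteLinearOrder α]
    [TopologicalSpace α] [OrderTopology α] {φ : ℝ → α} (h : MonotoneOn φ (Ioi a)) :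
    Tendsto φ atTop (𝓝 (⨆ (l : ℝ) (_ : a < l), φ l)) := by
  refine tendsto_order.2 ⟨fun b hb => ?_, fun b hb => ?_⟩
  · obtain ⟨l, hl, hbl⟩ : ∃ l, a < l ∧ b < φ l := by simpa [lt_iSup_iff] using hb
    filter_upwards [eventually_ge_atTop l] with l' hl'
    exact hbl.trans_le (h hl (hl.trans_le hl') hl')
  · filter_upwards [eventually_gt_atTop a] with l hl
    exact (le_iSup₂_of_le l hl le_rfl).trans_lt hb

theorem lintegral_iSup_Ioi {X : Type*} [MeasurableSpace X] {μ : Measure X}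
    {φ : ℝ → X → ℝ≥0∞} (hφ : ∀ l, Measurable (φ l)) (hmono : ∀ x, MonotoneOn (φ · x) (Ioi a)) :
    ∫⁻ x, ⨆ (l : ℝ) (_ : a < l), φ l x ∂μ = ⨆ (l : ℝ) (_ : a < l), ∫⁻ x, φ l x ∂μ := by
  have hint : MonotoneOn (fun l => ∫⁻ x, φ l x ∂μ) (Ioi a) := fun l hl l' hl' hll' =>
    lintegral_mono fun x => hmono x hl hl' hll'
  rw [hint.iSup_Ioi_eq_iSup_nat, ← lintegral_iSup (fun n => hφ _)]
  · exact lintegral_congr fun x => (hmono x).iSup_Ioi_eq_iSup_nat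
  · intro n m hnm x
    exact hmono x (show a < a + (n + 1) by simp; positivity)
      (show a < a + (m + 1) by simp; positivity) (by simpa using hnm)

end MonotoneOnIoi

section WeakLevel

variable {p l : ℝ} {H : ℝ → ℝ≥0∞}

def levelSet (p : ℝ) (H : ℝ → ℝ≥0∞) (l : ℝ) : Set ℝ :=
  {R | 0 < R ∧ ENNReal.ofReal (l * R ^ (1 / p)) < H R}

/-- The paper's `l ^ p · |{R > 0 : H R / R ^ (1 / p) > l}|`, with the division cleared. -/
def weakLevel (p : ℝ) (H : ℝ → ℝ≥0∞) (l : ℝ) : ℝ≥0∞ :=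
  ENNReal.ofReal (l ^ p) * volume (levelSet p H l)

theorem levelSet_subset_Ioi (p : ℝ) (H : ℝ → ℝ≥0∞) (l : ℝ) : levelSet p H l ⊆ Ioi 0 :=
  fun _ hR => hR.1

/-- Dilating by `(l / l') ^ p ≤ 1` maps the level set at height `l` into the one at height `l'`,
and the dilation factor is exactly compensated by `l ^ p / l' ^ p`. -/
theorem weakLevel_monotoneOn (hp : 0 < p) (hH : AntitoneOn H (Ioi 0)) :
    MonotoneOn (weakLevel p H) (Ioi 0) := by
  intro l (hl : 0 < l) l' (hl' : 0 < l') hll'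
  set c := (l / l') ^ p with hc
  have hc0 : 0 < c := by positivity
  have hc1 : c ≤ 1 := Real.rpow_le_one (by positivity) ((div_le_one hl').2 hll') hp.le
  have hsub : c • levelSet p H l ⊆ levelSet p H l' := by
    rintro _ ⟨R, ⟨hR, hlt⟩, rfl⟩
    change c * R ∈ levelSet p H l'
    have hcR : 0 < c * R := mul_pos hc0 hR
    have hroot : l' * (c * R) ^ (1 / p) = l * R ^ (1 / p) := by
      rw [Real.mul_rpow hc0.le hR.le, hc, ← Real.rpow_mul (by positivity),
        mul_one_div_cancel hp.ne', Real.rpow_one]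
      field_simp
    refine ⟨hcR, ?_⟩
    rw [hroot]
    exact hlt.trans_le (hH hcR hR (mul_le_of_le_one_left hR.le hc1))
  calc weakLevel p H l = ENNReal.ofReal (l' ^ p) * volume (c • levelSet p H l) := by
        rw [Measure.addHaar_smul, Module.finrank_self, pow_one, abs_of_pos hc0, ← mul_assoc,
          ← ENNReal.ofReal_mul (by positivity), hc, ← Real.mul_rpow hl'.le (by positivity),
          mul_div_cancel₀ _ hl'.ne', weakLevel]
    _ ≤ weakLevel p H l' := mul_le_mul_right (measure_mono hsub) _

theorem weakLevel_le (hp : 0 < p) (hl : 0 < l) {F : ℝ≥0∞} (hHF : ∀ R, 0 < R → H R ≤ F) :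
    weakLevel p H l ≤ F ^ p := by
  obtain rfl | hF := eq_or_ne F ⊤
  · simp [ENNReal.top_rpow_of_pos hp]
  have hsub : levelSet p H l ⊆ Ioo 0 ((F.toReal / l) ^ p) := by
    rintro R ⟨hR, hlt⟩
    have h : l * R ^ (1 / p) < F.toReal := by
      rw [← ENNReal.ofReal_lt_ofReal_iff_of_nonneg (by positivity), ENNReal.ofReal_toReal hF]
      exact hlt.trans_le (hHF R hR)
    refine ⟨hR, (Real.rpow_inv_lt_iff_of_pos hR.le (by positivity) hp).1 ?_⟩
    rwa [← one_div, lt_div_iff₀' hl]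
  calc weakLevel p H l ≤ ENNReal.ofReal (l ^ p) * volume (Ioo 0 ((F.toReal / l) ^ p)) :=
        mul_le_mul_right (measure_mono hsub) _
    _ = F ^ p := by
        rw [Real.volume_Ioo, sub_zero, ← ENNReal.ofReal_mul (by positivity),
          ← Real.mul_rpow hl.le (by positivity), mul_div_cancel₀ _ hl.ne',
          ← ENNReal.ofReal_rpow_of_nonneg ENNReal.toReal_nonneg hp.le, ENNReal.ofReal_toReal hF]

theorem ofReal_rpow_le_weakLevel (hp : 0 < p) (hH : AntitoneOn H (Ioi 0)) {R₀ c : ℝ}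
    (hR₀ : 0 < R₀) (hc : 0 < c) (hcH : ENNReal.ofReal c < H R₀) :
    ENNReal.ofReal (c ^ p) ≤ weakLevel p H (c / R₀ ^ (1 / p)) := by
  have hsub : Ioo 0 R₀ ⊆ levelSet p H (c / R₀ ^ (1 / p)) := by
    rintro R ⟨hR, hRR₀⟩
    refine ⟨hR, lt_of_lt_of_le ?_ (hH hR hR₀ hRR₀.le)⟩
    refine lt_of_le_of_lt (ENNReal.ofReal_le_ofReal ?_) hcH
    rw [div_mul_eq_mul_div, div_le_iff₀ (by positivity)]
    gcongr
  calc ENNReal.ofReal (c ^ p)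
        = ENNReal.ofReal ((c / R₀ ^ (1 / p)) ^ p) * volume (Ioo 0 R₀) := by
        rw [Real.volume_Ioo, sub_zero, ← ENNReal.ofReal_mul (by positivity),
          Real.div_rpow hc.le (by positivity), ← Real.rpow_mul hR₀.le,
          one_div_mul_cancel hp.ne', Real.rpow_one, div_mul_cancel₀ _ hR₀.ne']
    _ ≤ weakLevel p H (c / R₀ ^ (1 / p)) := mul_le_mul_right (measure_mono hsub) _

theorem iSup_weakLevel (hp : 0 < p) (hH : AntitoneOn H (Ioi 0)) :
    ⨆ (l : ℝ) (_ : 0 < l), weakLevel p H l = (⨆ (R : ℝ) (_ : 0 < R), H R) ^ p := by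
  refine le_antisymm
    (iSup₂_le fun l hl => weakLevel_le hp hl fun R hR => le_iSup₂_of_le R hR le_rfl)
    (le_of_forall_lt fun b hb => ?_)
  rw [← ENNReal.rpow_inv_lt_iff hp] at hb
  obtain ⟨R₀, hR₀, hbH⟩ : ∃ R₀, 0 < R₀ ∧ b ^ p⁻¹ < H R₀ := by simpa [lt_iSup_iff] using hb
  obtain ⟨c, -, hbc, hcH⟩ := ENNReal.lt_iff_exists_real_btwn.1 hbH
  have hc : 0 < c := ENNReal.ofReal_pos.1 (hbc.trans_le' zero_le)
  rw [ENNReal.rpow_inv_lt_iff hp, ENNReal.ofReal_rpow_of_pos hc] at hbc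
  exact hbc.trans_le ((ofReal_rpow_le_weakLevel hp hH hR₀ hc hcH).trans
    (le_iSup₂_of_le _ (by positivity) le_rfl))

end WeakLevel

theorem eventually_mem_ball_iff {X : Type*} [PseudoMetricSpace X] {r : ℝ} {x₀ y : X}
    (hy : y ∉ sphere x₀ r) :
    ∀ᶠ x in 𝓝 x₀, (y ∈ ball x r ↔ y ∈ ball x₀ r) := by
  have hdist : Continuous fun x => dist y x := continuous_const.dist continuous_id
  rcases lt_or_gt_of_ne (mt mem_sphere.2 hy) with hlt | hgt
  · filter_upwards [hdist.continuousAt.eventually_lt continuousAt_const hlt] with x hx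
    exact iff_of_true hx hlt
  · filter_upwards [continuousAt_const.eventually_lt hdist.continuousAt hgt] with x hx
    exact iff_of_false hx.not_gt hgt.not_gt

section BallIntegrals

variable {E : Type*} [NormedAddCommGroup E] [NormedSpace ℝ E] [FiniteDimensional ℝ E]
  [MeasurableSpace E] [BorelSpace E] {μ : Measure E} [μ.IsAddHaarMeasure] {f : E → ℝ} {r : ℝ}

def ballOscillation (μ : Measure E) (f : E → ℝ) (x : E) (r : ℝ) : ℝ≥0∞ :=
  ∫⁻ y in ball x r, ENNReal.ofReal |f y - ⨍ z in ball x r, f z ∂μ| ∂μ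

/-- Dominated convergence: the indicator of `ball x r` converges off the null sphere
`sphere x₀ r`. -/
theorem continuous_setIntegral_ball_comp_sub (hf : LocallyIntegrable f μ) {c : E → ℝ}
    (hc : Continuous c) {φ : ℝ → ℝ} (hφ : Continuous φ) (hφ_le : ∀ t, |φ t| ≤ |t|)
    (hr : 0 < r) : Continuous fun x => ∫ y in ball x r, φ (f y - c x) ∂μ := by
  refine continuous_iff_continuousAt.2 fun x₀ => ?_
  simp_rw [← integral_indicator measurableSet_ball]
  have hbound : IntegrableOn (fun y => |f y| + (|c x₀| + 1)) (closedBall x₀ (r + 1)) μ :=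
    (hf.integrableOn_isCompact (isCompact_closedBall _ _)).abs.add
      (integrableOn_const measure_closedBall_lt_top.ne)
  refine continuousAt_of_dominated (Eventually.of_forall fun x =>
      (hφ.comp_aestronglyMeasurable
        (hf.aestronglyMeasurable.sub aestronglyMeasurable_const)).indicator measurableSet_ball)
    ?_ (hbound.integrable_indicator measurableSet_closedBall) ?_
  · filter_upwards [ball_mem_nhds x₀ one_pos,
      (continuous_abs.comp hc).continuousAt.eventually_lt continuousAt_const (lt_add_one |c x₀|)]
      with x hx hcx
    refine Eventually.of_forall fun y => ?_
    by_cases hy : y ∈ ball x r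
    · have hy' : y ∈ closedBall x₀ (r + 1) := by
        rw [mem_ball] at hx hy
        rw [mem_closedBall]
        linarith [dist_triangle y x x₀]
      rw [indicator_of_mem hy, indicator_of_mem hy', Real.norm_eq_abs]
      calc |φ (f y - c x)| ≤ |f y - c x| := hφ_le _
        _ ≤ |f y| + |c x| := abs_sub _ _
        _ ≤ |f y| + (|c x₀| + 1) := by simp only [Function.comp_apply] at hcx; linarith
    · rw [indicator_of_notMem hy, norm_zero]
      exact indicator_nonneg (fun _ _ => by positivity) _
  · filter_upwards [measure_eq_zero_iff_ae_notMem.1 (Measure.addHaar_sphere_of_ne_zero μ x₀ hr.ne')]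
      with y hy
    by_cases hy₀ : y ∈ ball x₀ r
    · have hcont : Continuous fun x => φ (f y - c x) := by fun_prop
      refine hcont.continuousAt.congr ?_
      filter_upwards [eventually_mem_ball_iff hy] with x hx
      rw [indicator_of_mem (hx.2 hy₀)]
    · refine ContinuousAt.congr (f := fun _ => 0) continuousAt_const ?_
      filter_upwards [eventually_mem_ball_iff hy] with x hx
      rw [indicator_of_notMem (mt hx.1 hy₀)]

theorem continuous_setAverage_ball (hf : LocallyIntegrable f μ) (hr : 0 < r) :
    Continuous fun x => ⨍ y in ball x r, f y ∂μ := by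
  simp only [setAverage_eq, Measure.addHaar_real_ball_center μ _ r, smul_eq_mul]
  have hint := continuous_setIntegral_ball_comp_sub (μ := μ) (c := fun _ => 0) hf
    continuous_const continuous_id (fun t => le_rfl) hr
  simp only [id, sub_zero] at hint
  exact continuous_const.mul hint

theorem continuous_ballOscillation (hf : LocallyIntegrable f μ) (hr : 0 < r) :
    Continuous fun x => ballOscillation μ f x r := by
  have hint (x : E) : IntegrableOn (fun y => |f y - ⨍ z in ball x r, f z ∂μ|) (ball x r) μ :=
    (((hf.integrableOn_isCompact (isCompact_closedBall x r)).mono_set ball_subset_closedBall).sub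
      (integrableOn_const measure_ball_lt_top.ne)).abs
  have hofReal : (fun x => ballOscillation μ f x r) =
      fun x => ENNReal.ofReal (∫ y in ball x r, |f y - ⨍ z in ball x r, f z ∂μ| ∂μ) :=
    funext fun x => (ofReal_integral_eq_lintegral_ofReal (hint x)
      (Eventually.of_forall fun _ => abs_nonneg _)).symm
  rw [hofReal]
  exact ENNReal.continuous_ofReal.comp (continuous_setIntegral_ball_comp_sub hf
    (continuous_setAverage_ball hf hr) continuous_abs (fun t => (abs_abs t).le) hr)

end BallIntegrals

section LevelSetsInProducts

variable {X : Type*} {p l : ℝ}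

theorem isOpen_levelSet_iSup [TopologicalSpace X] {T : ℝ → X → ℝ≥0∞}
    (hT : ∀ r, 0 < r → Continuous (T r)) (p l : ℝ) :
    IsOpen {q : X × ℝ |
      q.2 ∈ levelSet p (fun R => ⨆ (r : ℝ) (_ : 0 < r) (_ : r < 1 / R), T r q.1) l} := by
  refine isOpen_iff_mem_nhds.2 fun ⟨x₀, R₀⟩ ⟨hR₀, hlt⟩ => ?_
  simp only [lt_iSup_iff] at hlt
  obtain ⟨r, hr, hrR, hTr⟩ := hlt
  have hsnd : ContinuousAt (fun q : X × ℝ => q.2) (x₀, R₀) := continuousAt_snd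
  have hlevel : ContinuousAt (fun q : X × ℝ => ENNReal.ofReal (l * q.2 ^ (1 / p))) (x₀, R₀) :=
    ENNReal.continuous_ofReal.continuousAt.comp
      (continuousAt_const.mul ((Real.continuousAt_rpow_const _ _ (Or.inl hR₀.ne')).comp hsnd))
  filter_upwards [hsnd.eventually (lt_mem_nhds hR₀),
    (continuousAt_const.div hsnd hR₀.ne').eventually (lt_mem_nhds hrR),
    hlevel.eventually_lt ((hT r hr).comp continuous_fst).continuousAt hTr] with q hq hrq hTq
  exact ⟨hq, hTq.trans_le (le_iSup₂_of_le r hr (le_iSup_of_le hrq le_rfl))⟩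

variable [MeasurableSpace X] {μ : Measure X} {G : X → ℝ → ℝ≥0∞}

theorem restrict_Ioi_levelSet (H : ℝ → ℝ≥0∞) :
    volume.restrict (Ioi 0) (levelSet p H l) = volume (levelSet p H l) := by
  rw [Measure.restrict_apply' measurableSet_Ioi, inter_eq_left.2 (levelSet_subset_Ioi p H l)]

theorem measurable_weakLevel (hG : MeasurableSet {q : X × ℝ | q.2 ∈ levelSet p (G q.1) l}) :
    Measurable fun x => weakLevel p (G x) l := by
  simp_rw [weakLevel, ← restrict_Ioi_levelSet]
  exact (measurable_measure_prodMk_left hG).const_mul _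

theorem ofReal_mul_prod_levelSet
    (hG : MeasurableSet {q : X × ℝ | q.2 ∈ levelSet p (G q.1) l}) :
    ENNReal.ofReal (l ^ p) * (μ.prod (volume.restrict (Ioi 0)))
      {q : X × ℝ | q.2 ∈ levelSet p (G q.1) l} = ∫⁻ x, weakLevel p (G x) l ∂μ := by
  rw [Measure.prod_apply hG, ← lintegral_const_mul' _ _ ENNReal.ofReal_ne_top]
  exact lintegral_congr fun x => congrArg _ (restrict_Ioi_levelSet _)

end LevelSetsInProducts

section SharpMaximal

variable {N : ℕ} {s : ℝ} {f : EuclideanSpace ℝ (Fin N) → ℝ}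

theorem fracSharpRes_mono (x : EuclideanSpace ℝ (Fin N)) :
    Monotone fun R => fracSharpRes N s R f x := fun _ _ hRR' =>
  iSup₂_mono fun _ _ => iSup_mono' fun hr => ⟨hr.trans_le hRR', le_rfl⟩

theorem antitoneOn_fracSharpRes_one_div (x : EuclideanSpace ℝ (Fin N)) :
    AntitoneOn (fun R => fracSharpRes N s (1 / R) f x) (Ioi 0) := fun _ hR _ _ hRR' =>
  fracSharpRes_mono x (one_div_le_one_div_of_le hR hRR')

theorem iSup_fracSharpRes_one_div (x : EuclideanSpace ℝ (Fin N)) :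
    ⨆ (R : ℝ) (_ : 0 < R), fracSharpRes N s (1 / R) f x = fracSharp N s f x := by
  refine le_antisymm (iSup₂_le fun R _ => iSup₂_mono fun r _ => iSup_le fun _ => le_rfl)
    (iSup₂_le fun r hr => le_iSup₂_of_le (1 / (r + 1)) (by positivity) ?_)
  refine le_iSup₂_of_le r hr (le_iSup_of_le ?_ le_rfl)
  rw [one_div_one_div]
  exact lt_add_one r

theorem isOpen_levelSet_fracSharpRes (hf : LocallyIntegrable f volume) (p l : ℝ) :
    IsOpen {q : EuclideanSpace ℝ (Fin N) × ℝ |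
      q.2 ∈ levelSet p (fun R => fracSharpRes N s (1 / R) f q.1) l} :=
  isOpen_levelSet_iSup
    (T := fun r x => ENNReal.ofReal (r ^ (-(s + N))) * ballOscillation volume f x r)
    (fun _ hr => (ENNReal.continuous_const_mul ENNReal.ofReal_ne_top).comp
      (continuous_ballOscillation hf hr)) p l

end SharpMaximal

theorem campanato_restricted_sharp_characterization_general
    (N : ℕ) (p s : ℝ) (hp : 1 < p)
    (f : EuclideanSpace ℝ (Fin N) → ℝ) (hf : LocallyIntegrable f volume) :
    (⨆ (l : ℝ) (_ : 0 < l), ENNReal.ofReal (l ^ p) *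
        (volume.prod (volume.restrict (Set.Ioi (0 : ℝ))))
          {q : EuclideanSpace ℝ (Fin N) × ℝ |
            0 < q.2 ∧ ENNReal.ofReal (l * q.2 ^ (1 / p)) < fracSharpRes N s (1 / q.2) f q.1})
      = ∫⁻ x, (fracSharp N s f x) ^ p ∧
    Tendsto (fun l : ℝ => ENNReal.ofReal (l ^ p) *
        (volume.prod (volume.restrict (Set.Ioi (0 : ℝ))))
          {q : EuclideanSpace ℝ (Fin N) × ℝ |
            0 < q.2 ∧ ENNReal.ofReal (l * q.2 ^ (1 / p)) < fracSharpRes N s (1 / q.2) f q.1})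
      atTop (nhds (∫⁻ x, (fracSharp N s f x) ^ p)) := by
  have hp0 : 0 < p := one_pos.trans hp
  set H : EuclideanSpace ℝ (Fin N) → ℝ → ℝ≥0∞ := fun x R => fracSharpRes N s (1 / R) f x
  have hmeas (l : ℝ) :
      MeasurableSet {q : EuclideanSpace ℝ (Fin N) × ℝ | q.2 ∈ levelSet p (H q.1) l} :=
    (isOpen_levelSet_fracSharpRes hf p l).measurableSet
  have hmono (x : EuclideanSpace ℝ (Fin N)) : MonotoneOn (weakLevel p (H x)) (Ioi 0) :=
    weakLevel_monotoneOn hp0 (antitoneOn_fracSharpRes_one_div x)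
  have hsup :
      ⨆ (l : ℝ) (_ : 0 < l), ∫⁻ x, weakLevel p (H x) l = ∫⁻ x, fracSharp N s f x ^ p := by
    rw [← lintegral_iSup_Ioi (fun l => measurable_weakLevel (hmeas l)) hmono]
    refine lintegral_congr fun x => ?_
    rw [iSup_weakLevel hp0 (antitoneOn_fracSharpRes_one_div x), iSup_fracSharpRes_one_div]
  have hΦ : MonotoneOn (fun l => ∫⁻ x, weakLevel p (H x) l) (Ioi 0) := fun l hl l' hl' hll' =>
    lintegral_mono fun x => hmono x hl hl' hll'
  simp only [← hsup, ← ofReal_mul_prod_levelSet (hmeas _)] at hΦ ⊢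
  -- the level sets of the statement are `levelSet p (H q.1) l` unfolded
  exact ⟨rfl, hΦ.tendsto_atTop_iSup_Ioi⟩

/-- Characterization of the Calderón–Campanato norm via restricted sharp maximal functions:
`‖f^#_s‖_p^p = sup_{λ>0} λ^p 𝓛^{N+1}({(x,R) : f^#_{1/R,s}(x)/R^{1/p} > λ})
             = lim_{λ→∞} λ^p 𝓛^{N+1}({(x,R) : f^#_{1/R,s}(x)/R^{1/p} > λ})`. -/
theorem campanato_restricted_sharp_characterization
    (N : ℕ) (p s : ℝ) (hp : 1 < p) (hs : s ∈ Set.Icc (0 : ℝ) 1)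
    (f : EuclideanSpace ℝ (Fin N) → ℝ) (hf : LocallyIntegrable f volume) :
    (⨆ (l : ℝ) (_ : 0 < l), ENNReal.ofReal (l ^ p) *
        (volume.prod (volume.restrict (Set.Ioi (0 : ℝ))))
          {q : EuclideanSpace ℝ (Fin N) × ℝ |
            0 < q.2 ∧ ENNReal.ofReal (l * q.2 ^ (1 / p)) < fracSharpRes N s (1 / q.2) f q.1})
      = ∫⁻ x, (fracSharp N s f x) ^ p ∧
    Tendsto (fun l : ℝ => ENNReal.ofReal (l ^ p) *
        (volume.prod (volume.restrict (Set.Ioi (0 : ℝ))))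
          {q : EuclideanSpace ℝ (Fin N) × ℝ |
            0 < q.2 ∧ ENNReal.ofReal (l * q.2 ^ (1 / p)) < fracSharpRes N s (1 / q.2) f q.1})
      atTop (nhds (∫⁻ x, (fracSharp N s f x) ^ p)) :=
  campanato_restricted_sharp_characterization_general N p s hp f hf
end
end

section
/- Let s ∈ (0,1], 1 < p < ∞, and suppose f : ℝ^N → ℝ satisfies |f(x) − f(y)| ≤ |x−y|^s (exp(g(x) + g(y)) − 1) for all x, y, where g ≥ 0 and g ∈ L^p(ℝ^N). Then there is a constant C depending only on N and p with ‖ log(1 + |f(x)−f(y)|/|x−y|^s) · |x−y|^{−N/p} ‖_{L(p,∞)(ℝ^N × ℝ^N)} ≤ C ‖g‖_{L^p(ℝ^N)}. -/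
/-!
The hypothesis gives `log (1 + |f x - f y| / |x - y| ^ s) ≤ g x + g y`, so the level set
`{l < log (…) * |x - y| ^ (-N/p)}` lies in the union of `{l/2 < g x * |x - y| ^ (-N/p)}` and
its mirror image. For fixed `x` the section of that set lies in a ball of radius
`(2 g x / l) ^ (p/N)`, of volume `|B₁| (2 g x / l) ^ p`; integrating in `x` (Tonelli) gives
`(l/2) ^ p |{…}| ≤ |B₁| ‖g‖ₚ ^ p`, which is the weak-`Lᵖ` bound with `C = 2 (2 |B₁|) ^ (1/p)`.
-/

open MeasureTheory Set Metric Module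
open scoped ENNReal

theorem ENNReal.ofReal_mul_rpow_one_div_le {p r : ℝ} {m M : ℝ≥0∞} (hp : 0 < p) (hr : 0 ≤ r)
    (h : ENNReal.ofReal (r ^ p) * m ≤ M) : ENNReal.ofReal r * m ^ (1 / p) ≤ M ^ (1 / p) :=
  calc ENNReal.ofReal r * m ^ (1 / p) = (ENNReal.ofReal (r ^ p) * m) ^ (1 / p) := by
        rw [ENNReal.mul_rpow_of_nonneg _ _ (by positivity),
          ← ENNReal.ofReal_rpow_of_nonneg hr hp.le, ← ENNReal.rpow_mul,
          mul_one_div_cancel hp.ne', ENNReal.rpow_one]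
    _ ≤ M ^ (1 / p) := ENNReal.rpow_le_rpow h (by positivity)

theorem Real.log_one_add_div_le_of_le_mul_exp_sub_one {u D G : ℝ} (hu : 0 ≤ u) (hD : 0 ≤ D)
    (hG : 0 ≤ G) (h : u ≤ D * (Real.exp G - 1)) : Real.log (1 + u / D) ≤ G := by
  rcases hD.eq_or_lt with rfl | hD
  · simpa using hG
  have hquot : u / D ≤ Real.exp G - 1 := (div_le_iff₀ hD).mpr (by linarith)
  rw [Real.log_le_iff_le_exp (by positivity)]
  linarith

theorem Real.lt_rpow_inv_of_lt_mul_rpow_neg {t a d c : ℝ} (ht : 0 < t) (hd : 0 ≤ d) (hc : 0 < c)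
    (h : t < a * d ^ (-c)) : d < (a / t) ^ c⁻¹ := by
  have hd : 0 < d := hd.lt_of_ne <| by
    rintro rfl
    rw [Real.zero_rpow (neg_ne_zero.mpr hc.ne'), mul_zero] at h
    exact h.not_gt ht
  have hdc : 0 < d ^ c := Real.rpow_pos_of_pos hd c
  rw [Real.rpow_neg hd.le, ← div_eq_mul_inv, lt_div_iff₀ hdc, mul_comm, ← lt_div_iff₀ ht] at h
  exact (Real.lt_rpow_inv_iff_of_pos hd.le (hdc.le.trans h.le) hc).mpr h

section

variable {E : Type*} [NormedAddCommGroup E] [NormedSpace ℝ E] [MeasurableSpace E] [BorelSpace E]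
  [FiniteDimensional ℝ E] (μ : Measure E) [μ.IsAddHaarMeasure]

theorem ofReal_rpow_mul_addHaar_setOf_lt_mul_dist_rpow_le {p t : ℝ} (hp : 0 < p) (ht : 0 < t)
    (a : ℝ) (x : E) :
    ENNReal.ofReal (t ^ p) * μ {y | t < a * dist x y ^ (-(finrank ℝ E / p))} ≤
      ENNReal.ofReal (a ^ p) * μ (ball 0 1) := by
  set S := {y | t < a * dist x y ^ (-(finrank ℝ E / p))}
  rcases S.eq_empty_or_nonempty with hS | ⟨y, hy⟩
  · simp [hS]
  have ha : 0 < a := pos_of_mul_pos_left (ht.trans hy) (Real.rpow_nonneg dist_nonneg _)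
  rcases (finrank ℝ E).eq_zero_or_pos with hE | hE
  -- in dimension `0` the kernel is `dist x y ^ 0 = 1` and `ball 0 1` is the whole space
  · have : Subsingleton E := ⟨fun y z => by
      rw [finrank_zero_iff_forall_zero.mp hE y, finrank_zero_iff_forall_zero.mp hE z]⟩
    have hta : t < a := by simpa [S, hE, Subsingleton.elim x y] using hy
    gcongr
    intro z _
    simp [Subsingleton.elim z 0]
  have : Nontrivial E := Module.nontrivial_of_finrank_pos hE
  set r := (a / t) ^ ((finrank ℝ E / p)⁻¹)
  have hsub : S ⊆ ball x r := fun z hz =>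
    mem_ball'.mpr (Real.lt_rpow_inv_of_lt_mul_rpow_neg ht dist_nonneg (by positivity) hz)
  have hr : t ^ p * r ^ finrank ℝ E = a ^ p := by
    rw [← Real.rpow_natCast, ← Real.rpow_mul (by positivity), inv_div,
      div_mul_cancel₀ _ (by positivity), Real.div_rpow ha.le ht.le,
      mul_div_cancel₀ _ (by positivity)]
  calc ENNReal.ofReal (t ^ p) * μ S ≤ ENNReal.ofReal (t ^ p) * μ (ball x r) := by gcongr
    _ = ENNReal.ofReal (a ^ p) * μ (ball 0 1) := by
      rw [Measure.addHaar_ball μ x (by positivity), ← mul_assoc,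
        ← ENNReal.ofReal_mul (by positivity), hr]

theorem ofReal_rpow_mul_prod_setOf_lt_mul_dist_rpow_le {p t : ℝ} (hp : 0 < p) (ht : 0 < t)
    {a : E → ℝ} (ha : AEMeasurable a μ) :
    ENNReal.ofReal (t ^ p) *
        μ.prod μ {q : E × E | t < a q.1 * dist q.1 q.2 ^ (-(finrank ℝ E / p))} ≤
      μ (ball 0 1) * ∫⁻ x, ENNReal.ofReal (a x ^ p) ∂μ := by
  set S := {q : E × E | t < a q.1 * dist q.1 q.2 ^ (-(finrank ℝ E / p))}
  have hS : NullMeasurableSet S (μ.prod μ) := nullMeasurableSet_lt aemeasurable_const <|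
    (ha.comp_fst (ν := μ)).mul ((measurable_fst.dist measurable_snd).pow_const _).aemeasurable
  calc ENNReal.ofReal (t ^ p) * μ.prod μ S
      = ENNReal.ofReal (t ^ p) * ∫⁻ q, S.indicator 1 q ∂μ.prod μ := by
        rw [lintegral_indicator_one₀ hS]
    _ ≤ ENNReal.ofReal (t ^ p) * ∫⁻ x, μ (Prod.mk x ⁻¹' S) ∂μ := by
        gcongr
        exact (lintegral_prod_le _).trans (lintegral_mono fun x => lintegral_indicator_one_le _)
    _ = ∫⁻ x, ENNReal.ofReal (t ^ p) * μ (Prod.mk x ⁻¹' S) ∂μ :=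
        (lintegral_const_mul' _ _ ENNReal.ofReal_ne_top).symm
    _ ≤ ∫⁻ x, ENNReal.ofReal (a x ^ p) * μ (ball 0 1) ∂μ :=
        lintegral_mono fun x => ofReal_rpow_mul_addHaar_setOf_lt_mul_dist_rpow_le μ hp ht (a x) x
    _ = μ (ball 0 1) * ∫⁻ x, ENNReal.ofReal (a x ^ p) ∂μ := by
        rw [lintegral_mul_const' _ _ measure_ball_lt_top.ne, mul_comm]

theorem ofReal_mul_prod_setOf_lt_mul_dist_rpow_rpow_one_div_le_of_le_add {p l : ℝ} (hp : 0 < p)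
    (hl : 0 < l) {Φ : E × E → ℝ} {a : E → ℝ} (ha : AEMeasurable a μ)
    (hΦ : ∀ x y, Φ (x, y) ≤ a x + a y) :
    ENNReal.ofReal l *
        μ.prod μ {q : E × E | l < Φ q * dist q.1 q.2 ^ (-(finrank ℝ E / p))} ^ (1 / p) ≤
      2 * (2 * μ (ball 0 1)) ^ (1 / p) * (∫⁻ x, ENNReal.ofReal (a x ^ p) ∂μ) ^ (1 / p) := by
  set c : ℝ := -(finrank ℝ E / p)
  set S := {q : E × E | l < Φ q * dist q.1 q.2 ^ c}
  set S₁ := {q : E × E | l / 2 < a q.1 * dist q.1 q.2 ^ c}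
  set I := ∫⁻ x, ENNReal.ofReal (a x ^ p) ∂μ
  have hsub : S ⊆ S₁ ∪ Prod.swap ⁻¹' S₁ := by
    rintro ⟨x, y⟩ hq
    have hΦK := mul_le_mul_of_nonneg_right (hΦ x y) (Real.rpow_nonneg (@dist_nonneg _ _ x y) c)
    by_contra h
    simp only [S, S₁, mem_union, mem_ofPred_eq, mem_preimage, Prod.fst_swap, Prod.snd_swap,
      dist_comm y x, not_or, not_lt] at h hq
    linarith [add_mul (a x) (a y) (dist x y ^ c)]
  have hswap : μ.prod μ (Prod.swap ⁻¹' S₁) = μ.prod μ S₁ :=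
    Measure.measurePreserving_swap.measure_preimage_emb
      MeasurableEquiv.prodComm.measurableEmbedding S₁
  have hS : ENNReal.ofReal ((l / 2) ^ p) * μ.prod μ S ≤ 2 * (μ (ball 0 1) * I) :=
    calc ENNReal.ofReal ((l / 2) ^ p) * μ.prod μ S
        ≤ ENNReal.ofReal ((l / 2) ^ p) * (μ.prod μ S₁ + μ.prod μ (Prod.swap ⁻¹' S₁)) := by
          gcongr
          exact (measure_mono hsub).trans (measure_union_le _ _)
      _ = 2 * (ENNReal.ofReal ((l / 2) ^ p) * μ.prod μ S₁) := by rw [hswap]; ring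
      _ ≤ 2 * (μ (ball 0 1) * I) := by
          gcongr 2 * ?_
          exact ofReal_rpow_mul_prod_setOf_lt_mul_dist_rpow_le μ hp (half_pos hl) ha
  calc ENNReal.ofReal l * μ.prod μ S ^ (1 / p)
      = 2 * (ENNReal.ofReal (l / 2) * μ.prod μ S ^ (1 / p)) := by
        rw [← mul_assoc, ← ENNReal.ofReal_ofNat 2, ← ENNReal.ofReal_mul zero_le_two,
          mul_div_cancel₀ _ two_ne_zero]
    _ ≤ 2 * (2 * (μ (ball 0 1) * I)) ^ (1 / p) := by
        gcongr
        exact ENNReal.ofReal_mul_rpow_one_div_le hp (half_pos hl).le hS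
    _ = 2 * (2 * μ (ball 0 1)) ^ (1 / p) * I ^ (1 / p) := by
        rw [← mul_assoc, ENNReal.mul_rpow_of_nonneg _ _ (by positivity), mul_assoc]

end

/-- Logarithmic Brezis–Van Schaftingen–Yung inequality from Crippa–De Lellis type estimates:
if `|f(x) − f(y)| ≤ |x−y|^s (exp(g(x)+g(y)) − 1)` with `0 ≤ g ∈ L^p`, then
`‖ log(1 + |f(x)−f(y)|/|x−y|^s) |x−y|^{−N/p} ‖_{L(p,∞)(ℝ^N×ℝ^N)} ≤ C ‖g‖_{L^p}`. -/
theorem log_BSY_from_CrippaDeLellis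
    (N : ℕ) (p : ℝ) (hp : 1 < p) :
    ∃ C > (0 : ℝ), ∀ s ∈ Set.Ioc (0 : ℝ) 1, ∀ f g : EuclideanSpace ℝ (Fin N) → ℝ,
      (∀ x, 0 ≤ g x) → MemLp g (ENNReal.ofReal p) volume →
      (∀ x y, |f x - f y| ≤ dist x y ^ s * (Real.exp (g x + g y) - 1)) →
      (⨆ (l : ℝ) (_ : 0 < l), ENNReal.ofReal l *
          ((volume.prod volume)
            {q : EuclideanSpace ℝ (Fin N) × EuclideanSpace ℝ (Fin N) |
              l < Real.log (1 + |f q.1 - f q.2| / dist q.1 q.2 ^ s) *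
                    dist q.1 q.2 ^ (-((N : ℝ) / p))}) ^ (1 / p))
        ≤ ENNReal.ofReal C * (∫⁻ x, ENNReal.ofReal (g x ^ p)) ^ (1 / p) := by
  have hp₀ : 0 < p := zero_lt_one.trans hp
  set B := volume (ball (0 : EuclideanSpace ℝ (Fin N)) 1)
  have hB : B ≠ ∞ := measure_ball_lt_top.ne
  have hB₀ : 0 < B.toReal := ENNReal.toReal_pos (measure_ball_pos volume _ one_pos).ne' hB
  refine ⟨2 * (2 * B.toReal) ^ (1 / p), by positivity, fun s _ f g hg₀ hg hfg => ?_⟩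
  have hC : ENNReal.ofReal (2 * (2 * B.toReal) ^ (1 / p)) = 2 * (2 * B) ^ (1 / p) := by
    rw [ENNReal.ofReal_mul zero_le_two,
      ← ENNReal.ofReal_rpow_of_nonneg (by positivity) (by positivity),
      ENNReal.ofReal_mul zero_le_two, ENNReal.ofReal_toReal hB, ENNReal.ofReal_ofNat]
  rw [hC]
  refine iSup₂_le fun l hl => ?_
  have key := ofReal_mul_prod_setOf_lt_mul_dist_rpow_rpow_one_div_le_of_le_add volume hp₀ hl
    hg.aestronglyMeasurable.aemeasurable
    (Φ := fun q => Real.log (1 + |f q.1 - f q.2| / dist q.1 q.2 ^ s)) fun x y =>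
      Real.log_one_add_div_le_of_le_mul_exp_sub_one (abs_nonneg _) (by positivity)
        (add_nonneg (hg₀ x) (hg₀ y)) (hfg x y)
  rwa [finrank_euclideanSpace_fin] at key
end

section
/- Let f ∈ C¹(ℝ) ∩ L^p(ℝ), 1 < p < ∞, with f' continuous. Then ∫_ℝ log(1 + |f'(x)|)^p dx ≤ liminf_{λ→∞} λ^p 𝓛²({(x,t) ∈ ℝ × (0,∞) : log(1 + |f(x+t)−f(x)|/t) · t^{−1/p} > λ}). -/
open MeasureTheory Filter Set
open scoped ENNReal Topology

noncomputable section

/-! If `a < log (1 + |f(x+t) - f(x)|/t)` for all small `t > 0`, then for large `λ` the section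
over `x` of the superlevel set contains the interval `(0, (a/λ)^p)`, and `λ^p` times its length is
exactly `a^p`.
Letting `a ↑ log (1 + |f'(x)|)` and integrating over `x` with Fatou's lemma gives the bound. -/

lemma lt_mul_rpow_neg_one_div_of_lt_div_rpow {p a l t : ℝ} (hp : 0 < p) (ha : 0 < a)
    (hl : 0 < l) (ht : 0 < t) (hta : t < (a / l) ^ p) : l < a * t ^ (-(1 / p)) := by
  have h : t ^ (1 / p) < a / l := by
    have := Real.rpow_lt_rpow ht.le hta (one_div_pos.mpr hp)
    rwa [← Real.rpow_mul (div_pos ha hl).le, mul_one_div_cancel hp.ne', Real.rpow_one] at this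
  rw [Real.rpow_neg ht.le, ← div_eq_mul_inv, lt_div_iff₀ (by positivity)]
  rwa [lt_div_iff₀ hl, mul_comm] at h

section

variable {α : Type*} {p : ℝ} {F : α → ℝ → ℝ}

def rescaledSuperlevelSet (p : ℝ) (F : α → ℝ → ℝ) (l : ℝ) : Set (α × ℝ) :=
  {q | 0 < q.2 ∧ l < F q.1 q.2 * q.2 ^ (-(1 / p))}

lemma measurableSet_rescaledSuperlevelSet [MeasurableSpace α]
    (hF : Measurable (Function.uncurry F)) (p l : ℝ) :
    MeasurableSet (rescaledSuperlevelSet p F l) :=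
  (measurableSet_lt measurable_const measurable_snd).inter
    (measurableSet_lt measurable_const (hF.mul (measurable_snd.pow_const _)))

lemma eventually_ofReal_rpow_le_mul_measure_section {a : ℝ} {x : α} (hp : 0 < p) (ha : 0 < a)
    (hF : ∀ᶠ t in 𝓝[>] 0, a < F x t) :
    ∀ᶠ l in atTop, ENNReal.ofReal (a ^ p) ≤
      ENNReal.ofReal (l ^ p) *
        volume.restrict (Ioi 0) (Prod.mk x ⁻¹' rescaledSuperlevelSet p F l) := by
  obtain ⟨δ, hδ, hδF⟩ := mem_nhdsGT_iff_exists_Ioo_subset.mp hF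
  have hsmall : Tendsto (fun l : ℝ => (a / l) ^ p) atTop (𝓝 0) := by
    simpa [Function.comp_def, Real.zero_rpow hp.ne'] using
      (Real.continuousAt_rpow_const 0 p (Or.inr hp.le)).tendsto.comp
        (tendsto_const_nhds.div_atTop tendsto_id)
  filter_upwards [eventually_gt_atTop 0, hsmall.eventually (eventually_le_nhds hδ)]
    with l hl hlδ
  have hsub : Ioo 0 ((a / l) ^ p) ⊆ Prod.mk x ⁻¹' rescaledSuperlevelSet p F l ∩ Ioi 0 := by
    rintro t ⟨ht0, hta⟩
    refine ⟨⟨ht0, ?_⟩, ht0⟩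
    calc l < a * t ^ (-(1 / p)) := lt_mul_rpow_neg_one_div_of_lt_div_rpow hp ha hl ht0 hta
      _ ≤ F x t * t ^ (-(1 / p)) := by
          gcongr
          exact (hδF ⟨ht0, hta.trans_le hlδ⟩).le
  calc ENNReal.ofReal (a ^ p) = ENNReal.ofReal (l ^ p) * volume (Ioo 0 ((a / l) ^ p)) := by
        rw [Real.volume_Ioo, sub_zero, ← ENNReal.ofReal_mul (by positivity),
          ← Real.mul_rpow hl.le (by positivity), mul_div_cancel₀ _ hl.ne']
    _ ≤ _ := by
        rw [Measure.restrict_apply' measurableSet_Ioi]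
        gcongr

lemma ofReal_rpow_le_liminf_mul_measure_section {b : ℝ} {x : α} (hp : 0 < p) (hb : 0 ≤ b)
    (hF : ∀ a < b, ∀ᶠ t in 𝓝[>] 0, a < F x t) :
    ENNReal.ofReal (b ^ p) ≤ liminf (fun l : ℝ => ENNReal.ofReal (l ^ p) *
      volume.restrict (Ioi 0) (Prod.mk x ⁻¹' rescaledSuperlevelSet p F l)) atTop := by
  rcases hb.eq_or_lt with rfl | hb
  · simp [Real.zero_rpow hp.ne']
  have hcont : Tendsto (fun a : ℝ => ENNReal.ofReal (a ^ p)) (𝓝[<] b)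
      (𝓝 (ENNReal.ofReal (b ^ p))) :=
    ((ENNReal.continuous_ofReal.tendsto _).comp
      (Real.continuousAt_rpow_const b p (Or.inl hb.ne')).tendsto).mono_left nhdsWithin_le_nhds
  refine le_of_tendsto hcont ?_
  filter_upwards [Ioo_mem_nhdsLT hb] with a ha
  exact le_liminf_of_le (by isBoundedDefault)
    (eventually_ofReal_rpow_le_mul_measure_section hp ha.1 (hF a ha.2))

theorem lintegral_rpow_le_liminf_mul_measure_rescaledSuperlevelSet [MeasurableSpace α]
    (μ : Measure α) {g : α → ℝ} (hp : 0 < p) (hFm : Measurable (Function.uncurry F))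
    (hg : ∀ x, 0 ≤ g x) (hF : ∀ x, ∀ a < g x, ∀ᶠ t in 𝓝[>] 0, a < F x t) :
    ∫⁻ x, ENNReal.ofReal (g x ^ p) ∂μ ≤ liminf (fun l : ℝ => ENNReal.ofReal (l ^ p) *
      μ.prod (volume.restrict (Ioi 0)) (rescaledSuperlevelSet p F l)) atTop := by
  have hmeas (l : ℝ) := measurable_measure_prodMk_left (ν := volume.restrict (Ioi (0 : ℝ)))
    (measurableSet_rescaledSuperlevelSet hFm p l)
  calc ∫⁻ x, ENNReal.ofReal (g x ^ p) ∂μ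
      ≤ ∫⁻ x, liminf (fun l : ℝ => ENNReal.ofReal (l ^ p) *
          volume.restrict (Ioi 0) (Prod.mk x ⁻¹' rescaledSuperlevelSet p F l)) atTop ∂μ :=
        lintegral_mono fun x => ofReal_rpow_le_liminf_mul_measure_section hp (hg x) (hF x)
    _ ≤ _ := lintegral_liminf_le fun l => (hmeas l).const_mul _
    _ = _ := by
        simp_rw [lintegral_const_mul _ (hmeas _),
          Measure.prod_apply (measurableSet_rescaledSuperlevelSet hFm p _)]

end

lemma HasDerivAt.tendsto_log_one_add_abs_slope {f : ℝ → ℝ} {f' x : ℝ}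
    (hf : HasDerivAt f f' x) :
    Tendsto (fun t => Real.log (1 + |f (x + t) - f x| / t)) (𝓝[>] 0)
      (𝓝 (Real.log (1 + |f'|))) := by
  have hslope : Tendsto (fun t => |f (x + t) - f x| / t) (𝓝[>] 0) (𝓝 |f'|) := by
    refine hf.tendsto_slope_zero_right.abs.congr' ?_
    filter_upwards [self_mem_nhdsWithin] with t (ht : 0 < t)
    rw [smul_eq_mul, abs_mul, abs_inv, abs_of_pos ht, inv_mul_eq_div]
  have hlog : ContinuousAt (fun y : ℝ => Real.log (1 + y)) |f'| := by
    fun_prop (disch := positivity)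
  exact hlog.tendsto.comp hslope

theorem log_lower_bound_one_dim_general
    (p : ℝ) (hp : 1 < p)
    (f : ℝ → ℝ) (hf : ContDiff ℝ 1 f) :
    ∫⁻ x, ENNReal.ofReal (Real.log (1 + |deriv f x|) ^ p)
      ≤ Filter.liminf (fun l : ℝ => ENNReal.ofReal (l ^ p) *
          (volume.prod (volume.restrict (Set.Ioi (0 : ℝ))))
            {q : ℝ × ℝ | 0 < q.2 ∧
              l < Real.log (1 + |f (q.1 + q.2) - f q.1| / q.2) * q.2 ^ (-(1 / p))})
        Filter.atTop := by
  have hmeas : Measurable fun q : ℝ × ℝ => Real.log (1 + |f (q.1 + q.2) - f q.1| / q.2) := by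
    have := hf.continuous
    fun_prop
  refine lintegral_rpow_le_liminf_mul_measure_rescaledSuperlevelSet volume (zero_lt_one.trans hp)
    (F := fun x t => Real.log (1 + |f (x + t) - f x| / t)) hmeas
    (fun x => Real.log_nonneg ?_) fun x a ha => ?_
  · exact le_add_of_nonneg_right (abs_nonneg _)
  · exact ((hf.differentiable one_ne_zero x).hasDerivAt.tendsto_log_one_add_abs_slope).eventually
      (eventually_gt_nhds ha)

/-- Lower bound for the logarithmic Brezis–Van Schaftingen–Yung functional:
`∫ log(1+|f'(x)|)^p dx ≤ liminf_{λ→∞} λ^p 𝓛²({(x,t) : log(1+|f(x+t)−f(x)|/t) t^{−1/p} > λ})`. -/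
theorem log_lower_bound_one_dim
    (p : ℝ) (hp : 1 < p)
    (f : ℝ → ℝ) (hf : ContDiff ℝ 1 f)
    (hfp : MemLp f (ENNReal.ofReal p) volume) :
    ∫⁻ x, ENNReal.ofReal (Real.log (1 + |deriv f x|) ^ p)
      ≤ Filter.liminf (fun l : ℝ => ENNReal.ofReal (l ^ p) *
          (volume.prod (volume.restrict (Set.Ioi (0 : ℝ))))
            {q : ℝ × ℝ | 0 < q.2 ∧
              l < Real.log (1 + |f (q.1 + q.2) - f q.1| / q.2) * q.2 ^ (-(1 / p))})
        Filter.atTop :=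
  log_lower_bound_one_dim_general p hp f hf
end
end
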